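/- arXiv:2308.04752 — 6 statements merged into one kernel-verified Lean document; each statement's English description precedes it below -/
import Mathlib

section
/- For every odd prime m and every nonnegative integer j such that m divides 8j+1 exactly once (m || 8j+1), the congruence b_4(m^2 n + j) ≡ 0 (mod 2) holds for every nonnegative integer n. -/
/-- `bReg k n` is the number of `k`-regular partitions of `n`,
i.e. partitions of `n` in which no part is divisible by `k`. -/
noncomputable def bReg (k n : ℕ) : ℕ :=
  (Finset.univ.filter fun p : n.Partition => ∀ i ∈ p.parts, ¬ k ∣ i).card

/-!
By Glaisher, `∑ b₄(n) qⁿ = ∏ᵢ (1 + qⁱ + q²ⁱ + q³ⁱ)`, which modulo 2 is `∏ᵢ (1 - qⁱ)(1 + qⁱ)²`, and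
Gauss's identity `∏ᵢ (1 - qⁱ)(1 + qⁱ)² = ∑_{k ≥ 0} q^{k(k+1)/2}` shows that `b₄(n)` is even unless
`8n + 1 = (2k + 1)²`. Gauss's identity follows from the finite form of Jacobi's triple product
`∑_{|k| ≤ n} q^{k(k+1)/2} [2n, n+k]_q = ∏_{j<n} (1 + qʲ)(1 + q^{j+1})`,
because `[2n, n+k]_q (q; q)_r ≡ 1` modulo a high power of `q` when `k` is small compared to `n`,
while `k ↦ -k-1` pairs off the terms. Finally, if `m ‖ 8j + 1` then `m ‖ 8(m²n + j) + 1`,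
which is therefore not a square.
-/

open PowerSeries Finset

section TruncatedProducts

variable {R : Type*} [CommRing R]

theorem X_pow_dvd_prod_sub_one {ι : Type*} {s : Finset ι} {f : ι → R⟦X⟧} {n : ℕ}
    (hf : ∀ j ∈ s, X ^ n ∣ f j - 1) : X ^ n ∣ ∏ j ∈ s, f j - 1 := by
  classical
  induction s using Finset.induction_on with
  | empty => simp
  | insert a s ha ih =>
    rw [prod_insert ha, show f a * ∏ j ∈ s, f j - 1 = f a * (∏ j ∈ s, f j - 1) + (f a - 1) by ring]
    exact dvd_add (dvd_mul_of_dvd_right (ih fun j hj ↦ hf j (mem_insert_of_mem hj)) _)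
      (hf a (mem_insert_self a s))

theorem coeff_mul_prod_of_X_pow_dvd_sub_one {ι : Type*} {s : Finset ι} (φ : R⟦X⟧)
    {f : ι → R⟦X⟧} {n : ℕ} (hf : ∀ j ∈ s, X ^ (n + 1) ∣ f j - 1) :
    coeff n (φ * ∏ j ∈ s, f j) = coeff n φ := by
  obtain ⟨c, hc⟩ := X_pow_dvd_prod_sub_one hf
  rw [show φ * ∏ j ∈ s, f j = φ + X ^ (n + 1) * (φ * c) by linear_combination φ * hc,
    map_add, coeff_X_pow_mul', if_neg (by omega), add_zero]

theorem X_pow_dvd_one_sub_X_pow_sub_one {m n : ℕ} (h : m ≤ n) :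
    X ^ m ∣ (1 - X ^ n : R⟦X⟧) - 1 := by
  rw [sub_sub_cancel_left]
  exact (pow_dvd_pow X h).neg_right

theorem X_pow_dvd_one_add_X_pow_sub_one {m n : ℕ} (h : m ≤ n) :
    X ^ m ∣ (1 + X ^ n : R⟦X⟧) - 1 := by
  rw [add_sub_cancel_left]
  exact pow_dvd_pow X h

end TruncatedProducts

section QBinomial

variable (R : Type*) [CommSemiring R]

/-- The Gaussian binomial coefficient `[n, k]_q` as a power series in `q = X`, extended by zero
to `k < 0` and `k > n`. -/
noncomputable def qBinomial : ℕ → ℤ → R⟦X⟧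
  | 0, k => if k = 0 then 1 else 0
  | n + 1, k => qBinomial n k + X ^ (n + 1 - k).toNat * qBinomial n (k - 1)

variable {R}

theorem qBinomial_zero_left (k : ℤ) : qBinomial R 0 k = if k = 0 then 1 else 0 := by
  rw [qBinomial]

theorem qBinomial_succ (n : ℕ) (k : ℤ) :
    qBinomial R (n + 1) k = qBinomial R n k + X ^ (n + 1 - k).toNat * qBinomial R n (k - 1) := by
  rw [qBinomial]

theorem qBinomial_of_neg {n : ℕ} {k : ℤ} (hk : k < 0) : qBinomial R n k = 0 := by
  induction n generalizing k with
  | zero => simp [qBinomial_zero_left, hk.ne]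
  | succ n ih => simp [qBinomial_succ, ih hk, ih (show k - 1 < 0 by omega)]

theorem qBinomial_of_lt {n : ℕ} {k : ℤ} (hk : n < k) : qBinomial R n k = 0 := by
  induction n generalizing k with
  | zero => simp [qBinomial_zero_left, (show k ≠ 0 by omega)]
  | succ n ih =>
    simp [qBinomial_succ, ih (show (n : ℤ) < k by omega), ih (show (n : ℤ) < k - 1 by omega)]

theorem qBinomial_zero_right (n : ℕ) : qBinomial R n 0 = 1 := by
  induction n with
  | zero => simp [qBinomial_zero_left]
  | succ n ih => simp [qBinomial_succ, ih, qBinomial_of_neg]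

/-- Outside `1 ≤ k ≤ n + 1` the factor `qBinomial R n (k - 1)` vanishes, so the exponents need to
agree only inside that range. -/
theorem X_pow_mul_X_pow_mul_qBinomial_sub_one {n : ℕ} {k : ℤ} {a b c d : ℕ}
    (h : 1 ≤ k → k ≤ n + 1 → a + b = c + d) :
    X ^ a * X ^ b * qBinomial R n (k - 1) = X ^ c * X ^ d * qBinomial R n (k - 1) := by
  by_cases hk : 1 ≤ k ∧ k ≤ n + 1
  · rw [← pow_add, ← pow_add, h hk.1 hk.2]
  · rcases not_and_or.mp hk with hk | hk
    · rw [qBinomial_of_neg (by omega), mul_zero, mul_zero]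
    · rw [qBinomial_of_lt (by omega), mul_zero, mul_zero]

theorem qBinomial_succ' (n : ℕ) (k : ℤ) :
    qBinomial R (n + 1) k = X ^ k.toNat * qBinomial R n k + qBinomial R n (k - 1) := by
  induction n generalizing k with
  | zero =>
    rcases lt_trichotomy k 0 with hk | rfl | hk
    · simp [qBinomial_of_neg hk, qBinomial_of_neg (show k - 1 < 0 by omega)]
    · simp [qBinomial_zero_right, qBinomial_of_neg]
    · rcases eq_or_lt_of_le (show 1 ≤ k by omega) with rfl | hk1
      · simp [qBinomial_succ, qBinomial_zero_left]
      · simp [qBinomial_of_lt (show ((0 + 1 : ℕ) : ℤ) < k by omega),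
          qBinomial_of_lt (show ((0 : ℕ) : ℤ) < k by omega),
          qBinomial_of_lt (show ((0 : ℕ) : ℤ) < k - 1 by omega)]
  | succ n ih =>
    conv_lhs => rw [qBinomial_succ (n + 1), ih, ih]
    rw [qBinomial_succ n k, qBinomial_succ n (k - 1)]
    have := X_pow_mul_X_pow_mul_qBinomial_sub_one (R := R) (n := n) (k := k)
      (a := (((n + 1 : ℕ) : ℤ) + 1 - k).toNat) (b := (k - 1).toNat)
      (c := k.toNat) (d := (n + 1 - k).toNat) (by omega)
    rw [show (((n + 1 : ℕ) : ℤ) + 1 - k).toNat = (n + 1 - (k - 1)).toNat by omega] at this ⊢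
    simp only [mul_add, ← mul_assoc, this]
    ring

theorem qBinomial_add_two (n : ℕ) (k : ℤ) :
    qBinomial R (n + 2) k = X ^ k.toNat * qBinomial R n k
      + (1 + X ^ (n + 1)) * qBinomial R n (k - 1) + X ^ (n + 2 - k).toNat * qBinomial R n (k - 2) := by
  rw [qBinomial_succ' (n + 1), qBinomial_succ n k, qBinomial_succ n (k - 1),
    show (n : ℤ) + 1 - (k - 1) = n + 2 - k by ring, show k - 1 - 1 = k - 2 by ring]
  have := X_pow_mul_X_pow_mul_qBinomial_sub_one (R := R) (n := n) (k := k)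
    (a := k.toNat) (b := (n + 1 - k).toNat) (c := n + 1) (d := 0) (by omega)
  rw [pow_zero, mul_one] at this
  simp only [mul_add, add_mul, ← mul_assoc, this]
  ring

end QBinomial

section QBinomialRing

variable {R : Type*} [CommRing R]

theorem one_sub_X_pow_mul_qBinomial (n k : ℕ) :
    (1 - X ^ (k + 1)) * qBinomial R (n + 1) (k + 1) = (1 - X ^ (n + 1)) * qBinomial R n k := by
  have h₁ := qBinomial_succ (R := R) n (k + 1)
  have h₂ := qBinomial_succ' (R := R) n (k + 1)
  have h₃ := X_pow_mul_X_pow_mul_qBinomial_sub_one (R := R) (n := n) (k := k + 1)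
    (a := k + 1) (b := (n + 1 - (k + 1 : ℤ)).toNat) (c := n + 1) (d := 0) (by omega)
  simp only [add_sub_cancel_right, pow_zero, mul_one, show ((k : ℤ) + 1).toNat = k + 1 by omega]
    at h₁ h₂ h₃
  linear_combination h₂ - X ^ (k + 1) * h₁ - h₃

theorem qBinomial_mul_prod_one_sub_X_pow (n k : ℕ) :
    qBinomial R n k * ∏ j ∈ range k, (1 - X ^ (j + 1)) = ∏ j ∈ range k, (1 - X ^ (n - j)) := by
  induction k generalizing n with
  | zero => simp [qBinomial_zero_right]
  | succ k ih =>
    rcases n with _ | n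
    · rw [qBinomial_of_lt (by omega), zero_mul, prod_range_succ', Nat.zero_sub, pow_zero,
        sub_self, mul_zero]
    · rw [prod_range_succ, prod_range_succ', Nat.sub_zero, Nat.cast_succ]
      calc qBinomial R (n + 1) (k + 1) * ((∏ j ∈ range k, (1 - X ^ (j + 1))) * (1 - X ^ (k + 1)))
          = (1 - X ^ (k + 1)) * qBinomial R (n + 1) (k + 1) * ∏ j ∈ range k, (1 - X ^ (j + 1)) := by
            ring
        _ = _ := by
          rw [one_sub_X_pow_mul_qBinomial, mul_assoc, ih, mul_comm]
          simp only [Nat.add_sub_add_right]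

theorem coeff_qBinomial_mul_prod_one_sub_X_pow {N K r i : ℕ} (hrK : r ≤ K) (hir : i ≤ r)
    (hiK : i + K ≤ N) :
    coeff i (qBinomial R N K * ∏ j ∈ range r, (1 - X ^ (j + 1))) = if i = 0 then 1 else 0 := by
  have h := qBinomial_mul_prod_one_sub_X_pow (R := R) N K
  obtain ⟨d, rfl⟩ := Nat.exists_eq_add_of_le hrK
  rw [prod_range_add, ← mul_assoc] at h
  rw [← coeff_mul_prod_of_X_pow_dvd_sub_one _ fun j _ ↦ X_pow_dvd_one_sub_X_pow_sub_one
      (show i + 1 ≤ r + j + 1 by omega), h, ← one_mul (∏ j ∈ _, _),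
    coeff_mul_prod_of_X_pow_dvd_sub_one _ fun j hj ↦ X_pow_dvd_one_sub_X_pow_sub_one
      (show i + 1 ≤ N - j by simp at hj; omega), coeff_one]

end QBinomialRing

section Triangular

def triangular (k : ℤ) : ℕ := (k * (k + 1) / 2).toNat

theorem two_mul_natCast_triangular (k : ℤ) : 2 * (triangular k : ℤ) = k * (k + 1) := by
  have h₁ : 0 ≤ k * (k + 1) := by nlinarith [sq_nonneg (2 * k + 1)]
  have h₂ : 2 ∣ k * (k + 1) := (Int.even_mul_succ_self k).two_dvd
  unfold triangular; omega

theorem natCast_triangular_add_one (k : ℤ) :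
    (triangular (k + 1) : ℤ) = triangular k + k + 1 := by
  linarith [two_mul_natCast_triangular k, two_mul_natCast_triangular (k + 1)]

theorem triangular_neg_sub_one (k : ℤ) : triangular (-k - 1) = triangular k := by
  have := two_mul_natCast_triangular (-k - 1)
  rw [show (-k - 1) * (-k - 1 + 1) = k * (k + 1) by ring, ← two_mul_natCast_triangular k] at this
  omega

theorem le_natCast_triangular (k : ℤ) : k ≤ triangular k := by
  nlinarith [two_mul_natCast_triangular k]

theorem neg_sub_one_le_natCast_triangular (k : ℤ) : -k - 1 ≤ triangular k := by
  nlinarith [two_mul_natCast_triangular k]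

theorem isSquare_eight_mul_triangular_add_one (k : ℕ) : IsSquare (8 * triangular k + 1) :=
  ⟨2 * k + 1, by have := two_mul_natCast_triangular k; zify; linear_combination 4 * this⟩

end Triangular

section SymmetricSums

variable {M : Type*} [AddCommMonoid M]

theorem sum_Icc_add_eq_sum_Icc {f : ℤ → M} {n : ℕ} (hf : ∀ k : ℤ, n < |k| → f k = 0) {c : ℤ}
    (hc : |c| ≤ 1) :
    ∑ k ∈ Icc (-(n + 1) : ℤ) (n + 1), f (k + c) = ∑ k ∈ Icc (-n : ℤ) n, f k := by
  have hshift : ∑ k ∈ Icc (-(n + 1) : ℤ) (n + 1), f (k + c)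
      = ∑ k ∈ Icc (-(n + 1) + c) (n + 1 + c), f k := by
    rw [← map_add_right_Icc, sum_map]; rfl
  rw [hshift]
  refine (sum_subset (fun k hk ↦ ?_) fun k _ hk ↦ hf k ?_).symm
  · simp only [mem_Icc] at hk ⊢; constructor <;> linarith [abs_le.mp hc]
  · simp only [mem_Icc, not_and_or, not_le] at hk
    rw [lt_abs]; omega

theorem sum_Icc_neg_natCast_natCast (f : ℤ → M) (n : ℕ) :
    ∑ k ∈ Icc (-n : ℤ) n, f k = ∑ k ∈ range n, (f k + f (-k - 1)) + f n := by
  induction n with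
  | zero => simp
  | succ n ih =>
    push_cast
    rw [neg_add', ← insert_Icc_left_eq_Icc_sub_one (by omega),
      ← insert_Icc_right_eq_Icc_add_one (by omega), sum_insert (by simp; omega),
      sum_insert (by simp), ih, sum_range_succ]
    abel

end SymmetricSums

section Gauss

/-- The finite form of Jacobi's triple product at `z = q`. -/
theorem sum_X_pow_triangular_mul_qBinomial {R : Type*} [CommSemiring R] (n : ℕ) :
    ∑ k ∈ Icc (-n : ℤ) n, X ^ triangular k * qBinomial R (2 * n) (n + k)
      = ∏ j ∈ range n, (1 + X ^ j) * (1 + X ^ (j + 1)) := by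
  induction n with
  | zero => simp [qBinomial_zero_right, triangular]
  | succ n ih =>
    set g : ℤ → R⟦X⟧ := fun k ↦ X ^ triangular k * qBinomial R (2 * n) (n + k) with hg
    have hsupp : ∀ k : ℤ, n < |k| → g k = 0 := by
      intro k hk
      rcases lt_abs.mp hk with hk | hk
      · simp only [hg, qBinomial_of_lt (show ((2 * n : ℕ) : ℤ) < n + k by push_cast; omega),
          mul_zero]
      · simp only [hg, qBinomial_of_neg (show (n : ℤ) + k < 0 by omega), mul_zero]
    have hterm : ∀ k ∈ Icc (-((n + 1 : ℕ) : ℤ)) (n + 1 : ℕ),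
        X ^ triangular k * qBinomial R (2 * (n + 1)) ((n + 1 : ℕ) + k)
          = X ^ n * g (k + 1) + (1 + X ^ (2 * n + 1)) * g (k + 0) + X ^ (n + 1) * g (k + -1) := by
      intro k hk
      rw [mem_Icc] at hk
      have e₁ := natCast_triangular_add_one k
      have e₂ := natCast_triangular_add_one (k + -1)
      rw [show k + -1 + 1 = k by ring] at e₂
      rw [show 2 * (n + 1) = 2 * n + 2 by ring, qBinomial_add_two, hg]
      simp only [← mul_assoc, ← pow_add, mul_add]
      rw [show triangular k + ((n + 1 : ℕ) + k : ℤ).toNat = n + triangular (k + 1) by omega,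
        show triangular k + ((2 * n : ℕ) + 2 - ((n + 1 : ℕ) + k) : ℤ).toNat
          = n + 1 + triangular (k + -1) by omega]
      congr 3 <;> push_cast <;> ring_nf
    rw [sum_congr rfl hterm, sum_add_distrib, sum_add_distrib, ← mul_sum, ← mul_sum, ← mul_sum]
    push_cast
    rw [sum_Icc_add_eq_sum_Icc hsupp (by norm_num), sum_Icc_add_eq_sum_Icc hsupp (by norm_num),
      sum_Icc_add_eq_sum_Icc hsupp (by norm_num), ih, prod_range_succ]
    ring

variable {R : Type*} [CommRing R]

theorem coeff_sum_X_pow_triangular_mul_qBinomial_mul_prod {i r n : ℕ} (hir : i ≤ r)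
    (hn : r + i < n) :
    coeff i ((∑ k ∈ Icc (-n : ℤ) n, X ^ triangular k * qBinomial R (2 * n) (n + k))
        * ∏ j ∈ range r, (1 - X ^ (j + 1)))
      = ∑ k ∈ Icc (-n : ℤ) n, if i = triangular k then 1 else 0 := by
  rw [sum_mul, map_sum]
  refine sum_congr rfl fun k _ ↦ ?_
  have hk₁ := le_natCast_triangular k
  have hk₂ := neg_sub_one_le_natCast_triangular k
  rw [mul_assoc, coeff_X_pow_mul']
  by_cases hle : triangular k ≤ i
  · rw [if_pos hle, show (n : ℤ) + k = ((n + k).toNat : ℕ) by omega,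
      coeff_qBinomial_mul_prod_one_sub_X_pow (by omega) (by omega) (by omega)]
    exact if_congr (by omega) rfl rfl
  · rw [if_neg hle, if_neg (by omega)]

theorem sum_Icc_ite_triangular_eq_two_mul {S : Type*} [Semiring S] {i r n : ℕ} (hir : i ≤ r)
    (hrn : r < n) :
    ∑ k ∈ Icc (-n : ℤ) n, (if i = triangular k then 1 else 0 : S)
      = 2 * ∑ k ∈ range (r + 1), if i = triangular k then 1 else 0 := by
  have hvanish : ∀ k : ℕ, r < k → (if i = triangular k then 1 else 0 : S) = 0 := fun k hk ↦
    if_neg (by have := le_natCast_triangular k; omega)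
  rw [sum_Icc_neg_natCast_natCast, hvanish n hrn, add_zero]
  simp only [triangular_neg_sub_one, ← two_mul, ← mul_sum]
  exact congrArg _ (sum_subset (range_subset_range.mpr (by omega))
    fun k _ hk ↦ hvanish k (by simp at hk; omega)).symm

theorem coeff_prod_one_add_X_pow_mul_prod_one_sub_X_pow {i r : ℕ} (hir : i ≤ r) :
    coeff i ((∏ j ∈ range (2 * r + 1), (1 + X ^ j) * (1 + X ^ (j + 1)))
        * ∏ j ∈ range r, (1 - X ^ (j + 1)))
      = 2 * coeff i (∏ j ∈ range r, (1 - X ^ (j + 1)) * (1 + X ^ (j + 1)) ^ 2 : R⟦X⟧) := by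
  have htail : ∀ m, ∀ j ∈ range m, X ^ (i + 1) ∣ (1 + X ^ (r + j + 1) : R⟦X⟧) - 1 :=
    fun _ j _ ↦ X_pow_dvd_one_add_X_pow_sub_one (by omega)
  have hsplit : (∏ j ∈ range (2 * r + 1), (1 + X ^ j) * (1 + X ^ (j + 1)) : R⟦X⟧)
        * ∏ j ∈ range r, (1 - X ^ (j + 1))
      = C 2 * ((∏ j ∈ range r, (1 - X ^ (j + 1)) * (1 + X ^ (j + 1)) ^ 2)
        * ∏ j ∈ range r, (1 + X ^ (r + j + 1))) * ∏ j ∈ range (r + 1), (1 + X ^ (r + j + 1)) := by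
    rw [prod_mul_distrib, prod_mul_distrib, prod_pow, prod_range_succ', two_mul,
      prod_range_add, add_assoc, prod_range_add, pow_zero, map_ofNat]
    ring
  rw [hsplit, mul_assoc, coeff_C_mul, coeff_mul_prod_of_X_pow_dvd_sub_one _ (htail _),
    coeff_mul_prod_of_X_pow_dvd_sub_one _ (htail _)]

/-- Gauss's identity `∏ (1 - qʲ)(1 + qʲ)² = ∑_{k ≥ 0} q^{k(k+1)/2}`, modulo `q ^ (r + 1)`. -/
theorem coeff_prod_one_sub_mul_one_add_sq {i r : ℕ} (hir : i ≤ r) :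
    coeff i (∏ j ∈ range r, (1 - X ^ (j + 1)) * (1 + X ^ (j + 1)) ^ 2 : ℤ⟦X⟧)
      = coeff i (∑ k ∈ range (r + 1), X ^ triangular k) := by
  have h := coeff_prod_one_add_X_pow_mul_prod_one_sub_X_pow (R := ℤ) hir
  rw [← sum_X_pow_triangular_mul_qBinomial, coeff_sum_X_pow_triangular_mul_qBinomial_mul_prod hir
    (by omega), sum_Icc_ite_triangular_eq_two_mul hir (by omega)] at h
  simp only [map_sum, coeff_X_pow]
  omega

end Gauss

open WithPiTopology in
theorem coeff_prod_sum_range_X_pow_eq_card_countRestricted {R : Type*} [CommRing R] {m n r : ℕ}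
    (hm : 0 < m) (hn : n ≤ r) :
    coeff n (∏ i ∈ range r, ∑ c ∈ range m, X ^ ((i + 1) * c) : R⟦X⟧)
      = #(Nat.Partition.countRestricted n m) := by
  classical
  let _ : TopologicalSpace R := ⊥
  have : DiscreteTopology R := ⟨rfl⟩
  have h := Nat.Partition.hasProd_powerSeriesMk_card_countRestricted R hm
  rw [HasProd, tendsto_iff_coeff_tendsto] at h
  obtain ⟨s₀, hs₀⟩ := Filter.eventually_atTop.mp (Filter.tendsto_pure.mp (nhds_discrete R ▸ h n))
  rw [coeff_mk] at hs₀
  rw [← hs₀ _ subset_union_left, ← prod_sdiff (subset_union_right (s₁ := s₀)), mul_comm,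
    coeff_mul_prod_of_X_pow_dvd_sub_one]
  intro i hi
  obtain ⟨m, rfl⟩ := Nat.exists_eq_add_of_lt hm
  have hi : r ≤ i := by simpa using (mem_sdiff.mp hi).2
  rw [sum_range_succ', mul_zero, pow_zero, add_sub_cancel_right]
  exact dvd_sum fun c _ ↦ pow_dvd_pow X (by nlinarith)

theorem sum_range_four_pow_eq_one_sub_mul_one_add_sq (y : (ZMod 2)⟦X⟧) :
    ∑ c ∈ range 4, y ^ c = (1 - y) * (1 + y) ^ 2 := by
  have h2 : (2 : (ZMod 2)⟦X⟧) = 0 := by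
    rw [← map_ofNat (C (R := ZMod 2)) 2, show (OfNat.ofNat 2 : ZMod 2) = 0 from rfl, map_zero]
  simp only [sum_range_succ, sum_range_zero]
  linear_combination (y ^ 2 + y ^ 3) * h2

theorem even_bReg_four_of_not_isSquare {n : ℕ} (hn : ¬ IsSquare (8 * n + 1)) :
    Even (bReg 4 n) := by
  have hcount : bReg 4 n = #(Nat.Partition.countRestricted n 4) := by
    rw [← Nat.Partition.card_restricted_eq_card_countRestricted n (by norm_num)]; rfl
  have htheta : coeff n (∑ k ∈ range (n + 1), X ^ triangular k : ℤ⟦X⟧) = 0 := by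
    rw [map_sum]
    refine sum_eq_zero fun k _ ↦ ?_
    rw [coeff_X_pow, if_neg]
    rintro rfl
    exact hn (isSquare_eight_mul_triangular_add_one k)
  have hmap : (∏ i ∈ range n, (1 - X ^ (i + 1)) * (1 + X ^ (i + 1)) ^ 2 : (ZMod 2)⟦X⟧)
      = PowerSeries.map (Int.castRingHom _)
          (∏ i ∈ range n, (1 - X ^ (i + 1)) * (1 + X ^ (i + 1)) ^ 2 : ℤ⟦X⟧) := by
    simp
  rw [← ZMod.natCast_eq_zero_iff_even, hcount,
    ← coeff_prod_sum_range_X_pow_eq_card_countRestricted (by norm_num) le_rfl]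
  simp_rw [pow_mul, sum_range_four_pow_eq_one_sub_mul_one_add_sq]
  rw [hmap, coeff_map, coeff_prod_one_sub_mul_one_add_sq le_rfl, htheta, map_zero]

theorem not_isSquare_of_dvd_of_not_sq_dvd {p a : ℕ} (hp : p.Prime) (h₁ : p ∣ a)
    (h₂ : ¬ p ^ 2 ∣ a) : ¬ IsSquare a := by
  rintro ⟨s, rfl⟩
  have hs : p ∣ s := (hp.dvd_mul.mp h₁).elim id id
  exact h₂ (pow_two p ▸ mul_dvd_mul hs hs)

theorem b4_even_of_exact_div_general (m : ℕ) (hm : m.Prime) (j : ℕ)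
    (h1 : m ∣ 8 * j + 1) (h2 : ¬ m ^ 2 ∣ 8 * j + 1) (n : ℕ) :
    bReg 4 (m ^ 2 * n + j) % 2 = 0 := by
  have hm2 : m ^ 2 ∣ m ^ 2 * (8 * n) := dvd_mul_right _ _
  have hsq : ¬ IsSquare (8 * (m ^ 2 * n + j) + 1) := by
    rw [show 8 * (m ^ 2 * n + j) + 1 = m ^ 2 * (8 * n) + (8 * j + 1) by ring]
    exact not_isSquare_of_dvd_of_not_sq_dvd hm
      ((Nat.dvd_add_right ((dvd_pow_self m two_ne_zero).trans hm2)).mpr h1)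
      (mt (Nat.dvd_add_right hm2).mp h2)
  exact Nat.even_iff.mp (even_bReg_four_of_not_isSquare hsq)

/-- For each odd prime `m` and each `j` with `m ‖ 8j+1`,
`b_4(m^2 n + j) ≡ 0 (mod 2)` for all `n`. -/
theorem b4_even_of_exact_div (m : ℕ) (hm : m.Prime) (hmodd : Odd m) (j : ℕ)
    (h1 : m ∣ 8 * j + 1) (h2 : ¬ m ^ 2 ∣ 8 * j + 1) (n : ℕ) :
    bReg 4 (m ^ 2 * n + j) % 2 = 0 :=
  b4_even_of_exact_div_general m hm j h1 h2 n
end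

section
/- ∑_{n≥0} b_4(n) q^{8n+1} ≡ ∑_{n≥1} τ(n) q^n (mod 2), where τ is the Ramanujan tau function; equivalently, b_4(n) ≡ τ(8n+1) (mod 2) for all n ≥ 0. -/
/-- The Ramanujan tau function, defined via the coefficients of
`q ∏_{k≥1} (1 - q^k)^24`; the truncated product gives the exact coefficient. -/
noncomputable def tau (n : ℕ) : ℤ :=
  PowerSeries.coeff (R := ℤ) n
    (PowerSeries.X * ∏ k ∈ Finset.range n, (1 - PowerSeries.X ^ (k + 1)) ^ 24)

/-!
Over a ring of characteristic two, Glaisher's identity gives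
`∑ b₄(n) qⁿ = ∏ (1 - q⁴ⁱ) / (1 - qⁱ) = ∏ (1 + qⁱ + q²ⁱ + q³ⁱ) = ∏ (1 - qⁱ)³`,
while the Frobenius turns `q ∏ (1 - qⁱ)²⁴` into `q ∏ (1 - q⁸ⁱ)³`, whose coefficient of `q^(8n+1)`
is the coefficient of `qⁿ` in `∏ (1 - qⁱ)³`. Both sides are then read off the same finite
truncation of `∏ (1 - qⁱ)³`.
-/

open Finset PowerSeries
open scoped PowerSeries.WithPiTopology

instance PowerSeries.charP {R : Type*} [Semiring R] (p : ℕ) [CharP R p] : CharP R⟦X⟧ p :=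
  charP_of_injective_ringHom C_injective p

section CharTwo

variable {R : Type*} [CommRing R] [CharP R 2]

theorem sum_range_four_pow_eq_one_sub_pow_three (x : R) :
    ∑ j ∈ range 4, x ^ j = (1 - x) ^ 3 := by
  simp only [sum_range_succ, sum_range_zero]
  linear_combination (2 * x - x ^ 2 + x ^ 3) * CharTwo.two_eq_zero (R := R)

theorem one_sub_pow_twentyFour (x : R) : (1 - x) ^ 24 = (1 - x ^ 8) ^ 3 := by
  rw [show 24 = 2 ^ 3 * 3 by rfl, pow_mul, sub_pow_char_pow, one_pow]; rfl

end CharTwo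

theorem bReg_eq_card_restricted (k n : ℕ) : bReg k n = #(Nat.Partition.restricted n (¬ k ∣ ·)) :=
  rfl

theorem coeff_mul_prod_one_sub_X_pow_pow {R : Type*} [CommRing R] (φ : R⟦X⟧) (s : Finset ℕ)
    (e : ℕ) {n : ℕ} (h : ∀ i ∈ s, n < i + 1) :
    coeff n (φ * ∏ i ∈ s, (1 - X ^ (i + 1)) ^ e) = coeff n φ := by
  nontriviality R
  rw [prod_pow]
  induction e with
  | zero => simp
  | succ e ih =>
    rw [pow_succ, ← mul_assoc, coeff_mul_prod_one_sub_of_lt_order _ _ _ _ fun i hi ↦ ?_, ih]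
    rw [order_X_pow]
    exact_mod_cast h i hi

theorem coeff_tprod_one_sub_X_pow_pow {R : Type*} [CommRing R] [TopologicalSpace R]
    [IsTopologicalRing R] [T2Space R] (e : ℕ) {n N : ℕ} (h : n < N) :
    coeff n (∏' i, (1 - X ^ (i + 1) : R⟦X⟧) ^ e) =
      coeff n (∏ i ∈ range N, (1 - X ^ (i + 1) : R⟦X⟧) ^ e) := by
  have hP := ((WithPiTopology.multipliable_one_sub_X_pow R).pow e).hasProd
  rw [HasProd, WithPiTopology.tendsto_iff_coeff_tendsto] at hP
  refine tendsto_nhds_unique (hP n) (tendsto_atTop_of_eventually_const (i₀ := range N) fun s hs ↦ ?_)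
  rw [← prod_sdiff hs, mul_comm, coeff_mul_prod_one_sub_X_pow_pow]
  intro i hi
  rw [mem_sdiff, mem_range] at hi
  omega

theorem powerSeriesMk_bReg_four_eq_tprod {R : Type*} [CommRing R] [NoZeroDivisors R] [CharP R 2]
    [TopologicalSpace R] [T2Space R] :
    PowerSeries.mk (fun n ↦ (bReg 4 n : R)) = ∏' i, (1 - X ^ (i + 1) : R⟦X⟧) ^ 3 := by
  rw [funext fun n ↦ congrArg (Nat.cast (R := R)) (bReg_eq_card_restricted 4 n),
    Nat.Partition.powerSeriesMk_card_restricted_eq_powerSeriesMk_card_countRestricted R four_pos,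
    Nat.Partition.powerSeriesMk_card_countRestricted_eq_tprod R four_pos]
  refine tprod_congr fun i ↦ ?_
  simp_rw [pow_mul]
  exact sum_range_four_pow_eq_one_sub_pow_three _

theorem bReg_four_cast_eq_coeff_prod {R : Type*} [CommRing R] [NoZeroDivisors R] [CharP R 2]
    {n N : ℕ} (h : n < N) :
    (bReg 4 n : R) = coeff n (∏ i ∈ range N, (1 - X ^ (i + 1) : R⟦X⟧) ^ 3) := by
  let _ : TopologicalSpace R := ⊥
  have _ : DiscreteTopology R := ⟨rfl⟩
  rw [← coeff_tprod_one_sub_X_pow_pow 3 h, ← powerSeriesMk_bReg_four_eq_tprod, coeff_mk]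

theorem tau_cast_eq_coeff_prod {R : Type*} [CommRing R] [CharP R 2] (n : ℕ) :
    (tau (8 * n + 1) : R) =
      coeff n (∏ k ∈ range (8 * n + 1), (1 - X ^ (k + 1) : R⟦X⟧) ^ 3) := by
  have hexpand : ∏ k ∈ range (8 * n + 1), (1 - X ^ (k + 1) : R⟦X⟧) ^ 24 =
      expand 8 (by norm_num) (∏ k ∈ range (8 * n + 1), (1 - X ^ (k + 1) : R⟦X⟧) ^ 3) := by
    simp only [map_prod, map_pow, map_sub, map_one, expand_X]
    refine prod_congr rfl fun k _ ↦ ?_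
    rw [one_sub_pow_twentyFour]
    ring
  rw [tau, ← eq_intCast (Int.castRingHom R), ← coeff_map]
  simp only [map_mul, map_X, map_prod, map_pow, map_sub, map_one]
  rw [hexpand, coeff_succ_X_mul, coeff_expand_mul]

/-- `b_4(n) ≡ τ(8n+1) (mod 2)` for all `n ≥ 0`. -/
theorem b4_congr_tau (n : ℕ) : (bReg 4 n : ℤ) ≡ tau (8 * n + 1) [ZMOD 2] := by
  refine (ZMod.intCast_eq_intCast_iff _ _ 2).mp ?_
  rw [Int.cast_natCast, bReg_four_cast_eq_coeff_prod (show n < 8 * n + 1 by omega),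
    tau_cast_eq_coeff_prod]
end

section
/- The Ramanujan tau function τ(n) is odd if and only if n is an odd perfect square. -/
/-!
Modulo 2, `(1 - x) ^ 24 = (1 + x ^ 8) * (1 + x ^ 16)`, so `τ(n)` has the parity of the number of
pairs `(A, B)` of finite sets of positive integers with `n = 1 + 8 ∑ A + 16 ∑ B`. Exchanging the
even parts of `A` with the doubles of the parts of `B` is an involution on these pairs (it is
`(1 + x) ^ 2 ≡ 1 + x ^ 2`). For `n = 8 a + 1` its fixed points are counted by the coefficient of
`q ^ a` in `∏_{d ∈ ℤ} (1 + q ^ |4d - 1|) ∏_{k ≥ 1} (1 + q ^ (4k))`, which is the Jacobi triple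
product `∏_{k ≥ 1} (1 + z q ^ k) (1 + z⁻¹ q ^ (k - 1)) (1 + q ^ k) ≡ ∑_{m ∈ ℤ} z ^ m q ^ (m(m+1)/2)`
(mod 2) at `q ↦ q ^ 4`, `z ↦ q⁻¹`.

The triple product is read on finite sets `D ⊆ ℤ`: translating `D` by `-1` lowers the charge by
one and the weight by the charge, which reduces everything to charge `0`. There the reflection
`d ↦ 1 - d` is an involution whose fixed points are pairs (distinct odd parts, distinct parts);
their generating function `F` satisfies `F(q) ≡ F(q ^ 2)`, hence `F ≡ 1`. So `τ(n)` is odd iff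
`n = 8 a + 1` with `a = 2 j ^ 2 + j` for some `j ∈ ℤ`, that is, iff `n = (4 j + 1) ^ 2`.

A finite set of positive integers is encoded throughout by the `Finset ℕ` of its elements minus one.
-/

open Finset PowerSeries

namespace RamanujanTau

theorem cast_card_eq_cast_card_fixed {α : Type*} [DecidableEq α] {s : Finset α} (g : α → α)
    (hg : ∀ x ∈ s, g x ∈ s) (hgg : ∀ x ∈ s, g (g x) = x) :
    (#s : ZMod 2) = #{x ∈ s | g x = x} := by
  have hfree : (#{x ∈ s | ¬g x = x} : ZMod 2) = 0 := by
    rw [card_eq_sum_ones, Nat.cast_sum]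
    refine sum_involution (fun x _ => g x) (fun _ _ => by decide)
      (fun x hx _ => (mem_filter.1 hx).2) (fun x hx => ?_) (fun x hx => hgg x (mem_filter.1 hx).1)
    obtain ⟨hxs, hx⟩ := mem_filter.1 hx
    exact mem_filter.2 ⟨hg x hxs, fun h => hx (by rw [← h]; exact hgg x hxs)⟩
  rw [← card_filter_add_card_filter_not (fun x => g x = x), Nat.cast_add, hfree, add_zero]

theorem sum_symmDiff_singleton {α G : Type*} [DecidableEq α] [AddCommGroup G] (s : Finset α)
    (a : α) (g : α → G) :
    ∑ x ∈ symmDiff s {a}, g x = ∑ x ∈ s, g x + if a ∈ s then -g a else g a := by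
  split_ifs with h
  · rw [show symmDiff s {a} = s.erase a by ext x; by_cases x = a <;> simp_all [mem_symmDiff],
      sum_erase_eq_sub h, sub_eq_add_neg]
  · rw [show symmDiff s {a} = insert a s by ext x; by_cases x = a <;> simp_all [mem_symmDiff],
      sum_insert h, add_comm]

theorem mem_powerset_range_of_sum_le {S : Finset ℕ} {N : ℕ} (h : ∑ x ∈ S, (x + 1) ≤ N) :
    S ∈ (range N).powerset :=
  mem_powerset.2 fun x hx => mem_range.2 <| by
    have := single_le_sum (f := fun x => x + 1) (fun _ _ => Nat.zero_le _) hx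
    omega

section FinsetSumEquiv

variable {α β γ : Type*}

def finsetSumEquiv (e : α ⊕ β ≃ γ) : Finset γ ≃ Finset α × Finset β :=
  e.symm.finsetCongr.trans Finset.sumEquiv.toEquiv

theorem sum_finsetSumEquiv_symm {M : Type*} [AddCommMonoid M] (e : α ⊕ β ≃ γ) (A : Finset α)
    (B : Finset β) (f : γ → M) :
    ∑ x ∈ (finsetSumEquiv e).symm (A, B), f x =
      ∑ a ∈ A, f (e (.inl a)) + ∑ b ∈ B, f (e (.inr b)) := by
  simp [finsetSumEquiv, Equiv.finsetCongr_symm, sum_map, sum_disjSum]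

theorem mem_finsetSumEquiv_fst (e : α ⊕ β ≃ γ) (S : Finset γ) (a : α) :
    a ∈ (finsetSumEquiv e S).1 ↔ e (.inl a) ∈ S := by
  simp [finsetSumEquiv]

theorem mem_finsetSumEquiv_snd (e : α ⊕ β ≃ γ) (S : Finset γ) (b : β) :
    b ∈ (finsetSumEquiv e S).2 ↔ e (.inr b) ∈ S := by
  simp [finsetSumEquiv]

end FinsetSumEquiv

abbrev parityEquiv : Finset ℕ ≃ Finset ℕ × Finset ℕ := finsetSumEquiv Equiv.natSumNatEquivNat

theorem sum_parityEquiv_symm {M : Type*} [AddCommMonoid M] (E O : Finset ℕ) (f : ℕ → M) :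
    ∑ x ∈ parityEquiv.symm (E, O), f x = ∑ j ∈ E, f (2 * j) + ∑ j ∈ O, f (2 * j + 1) := by
  simp [sum_finsetSumEquiv_symm]

theorem sum_eq_sum_parityEquiv {M : Type*} [AddCommMonoid M] (S : Finset ℕ) (f : ℕ → M) :
    ∑ x ∈ S, f x = ∑ j ∈ (parityEquiv S).1, f (2 * j) + ∑ j ∈ (parityEquiv S).2, f (2 * j + 1) := by
  conv_lhs => rw [← parityEquiv.symm_apply_apply S]
  exact sum_parityEquiv_symm _ _ f

theorem sum_succ_parityEquiv_symm (E O : Finset ℕ) :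
    ∑ x ∈ parityEquiv.symm (E, O), (x + 1) = ∑ j ∈ E, (2 * j + 1) + 2 * ∑ j ∈ O, (j + 1) := by
  simp only [sum_parityEquiv_symm, mul_sum, mul_add, mul_one]

theorem sum_succ_eq_sum_parityEquiv (S : Finset ℕ) :
    ∑ x ∈ S, (x + 1) =
      ∑ j ∈ (parityEquiv S).1, (2 * j + 1) + 2 * ∑ j ∈ (parityEquiv S).2, (j + 1) := by
  conv_lhs => rw [← parityEquiv.symm_apply_apply S]
  exact sum_succ_parityEquiv_symm _ _

def natSumNatEquivInt : ℕ ⊕ ℕ ≃ ℤ := Equiv.intEquivNatSumNat.symm.trans (Equiv.addRight 1)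

@[simp]
theorem natSumNatEquivInt_inl (a : ℕ) : natSumNatEquivInt (.inl a) = a + 1 := rfl

@[simp]
theorem natSumNatEquivInt_inr (b : ℕ) : natSumNatEquivInt (.inr b) = -b := by
  change Int.negSucc b + 1 = -b
  omega

abbrev signEquiv : Finset ℤ ≃ Finset ℕ × Finset ℕ := finsetSumEquiv natSumNatEquivInt

theorem sum_signEquiv_symm {M : Type*} [AddCommMonoid M] (A B : Finset ℕ) (f : ℤ → M) :
    ∑ x ∈ signEquiv.symm (A, B), f x = ∑ a ∈ A, f (a + 1) + ∑ b ∈ B, f (-b) := by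
  simp [sum_finsetSumEquiv_symm]

theorem one_sub_pow_twentyFour {R : Type*} [CommRing R] [CharP R 2] (u : R) :
    (1 - u) ^ 24 = (1 + u ^ 8) * (1 + u ^ 16) := by
  have h8 : (1 - u) ^ 8 = 1 + u ^ 8 := by
    simpa [CharTwo.sub_eq_add] using sub_pow_char_pow (p := 2) 1 u 3
  calc (1 - u) ^ 24 = ((1 - u) ^ 8) ^ 3 := by ring
    _ = (1 + u ^ 8) * (1 + u ^ 8) ^ 2 := by rw [h8]; ring
    _ = (1 + u ^ 8) * (1 + u ^ 16) := by rw [CharTwo.add_sq]; ring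

theorem prod_one_add_X_pow {R : Type*} [CommSemiring R] (s : Finset ℕ) (w : ℕ → ℕ) :
    ∏ k ∈ s, (1 + X ^ w k : R⟦X⟧) = ∑ A ∈ s.powerset, X ^ ∑ k ∈ A, w k := by
  simp_rw [prod_one_add, prod_pow_eq_pow_sum]

def tauPairs (n : ℕ) : Finset (Finset ℕ × Finset ℕ) :=
  ((range n).powerset ×ˢ (range n).powerset).filter fun p =>
    n = 8 * ∑ k ∈ p.1, (k + 1) + 16 * ∑ k ∈ p.2, (k + 1) + 1

theorem mem_tauPairs {n : ℕ} {p : Finset ℕ × Finset ℕ} :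
    p ∈ tauPairs n ↔ n = 8 * ∑ k ∈ p.1, (k + 1) + 16 * ∑ k ∈ p.2, (k + 1) + 1 :=
  ⟨fun h => (mem_filter.1 h).2, fun h => mem_filter.2 ⟨mem_product.2
    ⟨mem_powerset_range_of_sum_le (by omega), mem_powerset_range_of_sum_le (by omega)⟩, h⟩⟩

theorem intCast_tau_eq_card_tauPairs (n : ℕ) : (tau n : ZMod 2) = #(tauPairs n) := by
  have : CharP (ZMod 2)⟦X⟧ 2 := charP_of_injective_algebraMap' (ZMod 2) 2
  have hmap : map (Int.castRingHom (ZMod 2)) (X * ∏ k ∈ range n, (1 - X ^ (k + 1)) ^ 24) =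
      X * ∏ k ∈ range n, (1 + X ^ (8 * (k + 1))) * (1 + X ^ (16 * (k + 1))) := by
    simp [one_sub_pow_twentyFour, pow_mul']
  rw [tau, ← eq_intCast (Int.castRingHom (ZMod 2)), ← coeff_map, hmap, prod_mul_distrib,
    prod_one_add_X_pow, prod_one_add_X_pow, sum_mul_sum, ← sum_product', mul_sum, map_sum]
  simp_rw [← pow_add, ← pow_succ', coeff_X_pow, ← mul_sum]
  rw [sum_boole]
  rfl

def exchangeEvenParts (p : Finset ℕ × Finset ℕ) : Finset ℕ × Finset ℕ :=
  (parityEquiv.symm ((parityEquiv p.1).1, p.2), (parityEquiv p.1).2)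

theorem exchangeEvenParts_exchangeEvenParts (p : Finset ℕ × Finset ℕ) :
    exchangeEvenParts (exchangeEvenParts p) = p := by
  simp [exchangeEvenParts]

theorem exchangeEvenParts_mem {n : ℕ} {p : Finset ℕ × Finset ℕ} (hp : p ∈ tauPairs n) :
    exchangeEvenParts p ∈ tauPairs n := by
  obtain ⟨A, B⟩ := p
  rw [mem_tauPairs, sum_succ_eq_sum_parityEquiv A] at hp
  rw [mem_tauPairs, exchangeEvenParts, sum_succ_parityEquiv_symm]
  dsimp only at hp ⊢
  omega

theorem exchangeEvenParts_eq_self_iff (p : Finset ℕ × Finset ℕ) :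
    exchangeEvenParts p = p ↔ (parityEquiv p.1).2 = p.2 := by
  obtain ⟨A, B⟩ := p
  refine ⟨fun h => (Prod.ext_iff.1 h).2, fun h => ?_⟩
  dsimp only at h
  simp only [exchangeEvenParts, ← h, Prod.mk.eta, Equiv.symm_apply_apply]

def spin (d : ℤ) : ℤ := if 0 < d then 1 else -1

theorem abs_sub_one_eq_abs_sub_spin (d : ℤ) : |d - 1| = |d| - spin d := by
  unfold spin; split_ifs <;> cases abs_cases d <;> cases abs_cases (d - 1) <;> omega

theorem spin_sub_one (d : ℤ) : spin (d - 1) = spin d - if d = 1 then 2 else 0 := by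
  unfold spin; split_ifs <;> omega

theorem spin_one_sub (d : ℤ) : spin (1 - d) = -spin d := by
  unfold spin; split_ifs <;> omega

theorem spin_le_abs (d : ℤ) : spin d ≤ |d| := by
  unfold spin; split_ifs <;> cases abs_cases d <;> omega

def charge (D : Finset ℤ) : ℤ := ∑ d ∈ D, spin d

def energy (D : Finset ℤ) : ℤ := ∑ d ∈ D, |d|

def weight (p : Finset ℤ × Finset ℕ) : ℤ := energy p.1 + ∑ c ∈ p.2, ((c : ℤ) + 1)

theorem energy_nonneg (D : Finset ℤ) : 0 ≤ energy D :=
  sum_nonneg fun d _ => abs_nonneg d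

theorem sum_natCast_add_one_nonneg (C : Finset ℕ) : 0 ≤ ∑ c ∈ C, ((c : ℤ) + 1) :=
  sum_nonneg fun c _ => by positivity

theorem weight_nonneg (p : Finset ℤ × Finset ℕ) : 0 ≤ weight p :=
  add_nonneg (energy_nonneg p.1) (sum_natCast_add_one_nonneg p.2)

theorem charge_le_weight (p : Finset ℤ × Finset ℕ) : charge p.1 ≤ weight p :=
  (sum_le_sum fun d _ => spin_le_abs d).trans
    (le_add_of_nonneg_right (sum_natCast_add_one_nonneg _))

theorem charge_signEquiv_symm (A B : Finset ℕ) : charge (signEquiv.symm (A, B)) = #A - #B := by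
  simp only [charge, sum_signEquiv_symm, spin]
  rw [sum_congr rfl fun a _ => if_pos (by omega), sum_congr rfl fun b _ => if_neg (by omega)]
  simp [sub_eq_add_neg]

theorem energy_signEquiv_symm (A B : Finset ℕ) :
    energy (signEquiv.symm (A, B)) = ∑ a ∈ A, ((a : ℤ) + 1) + ∑ b ∈ B, (b : ℤ) := by
  simp only [energy, sum_signEquiv_symm, abs_neg, Nat.abs_cast]
  exact congrArg (· + _) (sum_congr rfl fun a _ => abs_of_nonneg (by positivity))

theorem energy_signEquiv_symm_self (E : Finset ℕ) :
    energy (signEquiv.symm (E, E)) = ∑ e ∈ E, (2 * (e : ℤ) + 1) := by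
  rw [energy_signEquiv_symm, ← sum_add_distrib]
  exact sum_congr rfl fun _ _ => by ring

/-- `(D, C)` indexes a monomial of `∏_{k ≥ 1} (1 + z q ^ k) (1 + z⁻¹ q ^ (k - 1)) (1 + q ^ k)`:
`d ∈ D` picks `z q ^ d` if `d > 0` and `z⁻¹ q ^ (-d)` if `d ≤ 0`, and `c ∈ C` picks `q ^ (c + 1)`.
So `#(jacobiSet m M)` is the coefficient of `z ^ m q ^ M`. -/
noncomputable def jacobiSet (m M : ℤ) : Finset (Finset ℤ × Finset ℕ) :=
  ((Icc (-M) M).powerset ×ˢ (range M.toNat).powerset).filter fun p =>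
    charge p.1 = m ∧ weight p = M

theorem mem_jacobiSet {m M : ℤ} {p : Finset ℤ × Finset ℕ} :
    p ∈ jacobiSet m M ↔ charge p.1 = m ∧ weight p = M := by
  refine ⟨fun h => (mem_filter.1 h).2, fun h => mem_filter.2 ⟨mem_product.2 ⟨?_, ?_⟩, h⟩⟩
  · refine mem_powerset.2 fun d hd => mem_Icc.2 (abs_le.1 ?_)
    have := single_le_sum (fun d _ => abs_nonneg d) hd
    have := sum_natCast_add_one_nonneg p.2
    unfold weight energy at h; omega
  · refine mem_powerset.2 fun c hc => mem_range.2 ?_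
    have := single_le_sum (f := fun c : ℕ => (c : ℤ) + 1) (fun c _ => by positivity) hc
    have := energy_nonneg p.1
    unfold weight at h; omega

theorem jacobiSet_eq_empty_of_neg {m M : ℤ} (hM : M < 0) : jacobiSet m M = ∅ :=
  eq_empty_of_forall_notMem fun p hp => by
    have := weight_nonneg p; rw [(mem_jacobiSet.1 hp).2] at this; omega

/-- Translation by `-1` of the Maya diagram `{d ∈ D | 0 < d} ∪ {d ≤ 0 | d ∉ D}`. -/
def shiftEquiv : Equiv.Perm (Finset ℤ) :=
  (symmDiff_left_involutive {1}).toPerm.trans (Equiv.subRight (1 : ℤ)).finsetCongr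

theorem sum_shiftEquiv {G : Type*} [AddCommGroup G] (D : Finset ℤ) (g : ℤ → G) :
    ∑ x ∈ shiftEquiv D, g x = ∑ x ∈ D, g (x - 1) + if 1 ∈ D then -g 0 else g 0 := by
  simp [shiftEquiv, sum_map, sum_symmDiff_singleton]

theorem charge_shiftEquiv (D : Finset ℤ) : charge (shiftEquiv D) = charge D - 1 := by
  simp only [charge, sum_shiftEquiv, spin_sub_one, sum_sub_distrib, sum_ite_eq']
  split_ifs <;> simp [spin] <;> ring

theorem energy_shiftEquiv (D : Finset ℤ) : energy (shiftEquiv D) = energy D - charge D := by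
  simp [energy, charge, sum_shiftEquiv, abs_sub_one_eq_abs_sub_spin, sum_sub_distrib]

theorem card_jacobiSet_eq_card_jacobiSet_sub_one (m M : ℤ) :
    #(jacobiSet m M) = #(jacobiSet (m - 1) (M - m)) := by
  refine card_equiv (shiftEquiv.prodCongr (Equiv.refl _)) fun p => ?_
  simp only [mem_jacobiSet, weight, Equiv.prodCongr_apply, Prod.map, Equiv.refl_apply,
    charge_shiftEquiv, energy_shiftEquiv]
  omega

def reflect (D : Finset ℤ) : Finset ℤ := (Equiv.subLeft (1 : ℤ)).finsetCongr D

theorem reflect_reflect (D : Finset ℤ) : reflect (reflect D) = D := by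
  simp [reflect, map_map]

theorem charge_reflect (D : Finset ℤ) : charge (reflect D) = -charge D := by
  simp [reflect, charge, sum_map, spin_one_sub]

theorem energy_reflect (D : Finset ℤ) : energy (reflect D) = energy D - charge D := by
  simp only [reflect, energy, charge, Equiv.finsetCongr_apply, sum_map, Equiv.coe_toEmbedding,
    Equiv.subLeft_apply]
  simp_rw [abs_sub_comm (1 : ℤ), abs_sub_one_eq_abs_sub_spin, sum_sub_distrib]

theorem signEquiv_reflect (D : Finset ℤ) : signEquiv (reflect D) = (signEquiv D).swap := by
  ext x <;> simp [reflect, mem_finsetSumEquiv_fst, mem_finsetSumEquiv_snd]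

theorem reflect_eq_self_iff (D : Finset ℤ) :
    reflect D = D ↔ (signEquiv D).1 = (signEquiv D).2 := by
  rw [← signEquiv.injective.eq_iff, signEquiv_reflect, Prod.ext_iff, Prod.fst_swap, Prod.snd_swap]
  exact ⟨fun h => h.2, fun h => ⟨h.symm, h⟩⟩

def oddDistinctPairs (M : ℕ) : Finset (Finset ℕ × Finset ℕ) :=
  ((range M).powerset ×ˢ (range M).powerset).filter fun p =>
    ∑ e ∈ p.1, (2 * e + 1) + ∑ c ∈ p.2, (c + 1) = M

theorem mem_oddDistinctPairs {M : ℕ} {p : Finset ℕ × Finset ℕ} :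
    p ∈ oddDistinctPairs M ↔ ∑ e ∈ p.1, (2 * e + 1) + ∑ c ∈ p.2, (c + 1) = M := by
  refine ⟨fun h => (mem_filter.1 h).2, fun h => mem_filter.2 ⟨mem_product.2 ⟨?_, ?_⟩, h⟩⟩
  · have : ∑ e ∈ p.1, (e + 1) ≤ ∑ e ∈ p.1, (2 * e + 1) := sum_le_sum fun e _ => by omega
    exact mem_powerset_range_of_sum_le (by omega)
  · exact mem_powerset_range_of_sum_le (by omega)

theorem card_fixed_jacobiSet_zero (K : ℕ) :
    #{p ∈ jacobiSet 0 K | reflect p.1 = p.1} = #(oddDistinctPairs K) := by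
  simp only [reflect_eq_self_iff]
  refine card_nbij' (fun p => ((signEquiv p.1).1, p.2)) (fun q => (signEquiv.symm (q.1, q.1), q.2))
    ?_ ?_ ?_ ?_
  · rintro ⟨D, C⟩ hp
    simp only [mem_coe, mem_filter, mem_jacobiSet, weight] at hp
    obtain ⟨⟨-, hw⟩, hD⟩ := hp
    rw [← signEquiv.symm_apply_apply D, ← Prod.mk.eta (p := signEquiv D), ← hD,
      energy_signEquiv_symm_self] at hw
    simp only [mem_coe, mem_oddDistinctPairs]
    exact_mod_cast hw
  · rintro ⟨E, C⟩ hq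
    simp only [mem_coe, mem_oddDistinctPairs] at hq
    simp only [mem_coe, mem_filter, mem_jacobiSet, weight, charge_signEquiv_symm,
      energy_signEquiv_symm_self, Equiv.apply_symm_apply, sub_self, true_and, and_true]
    exact_mod_cast hq
  · rintro ⟨D, C⟩ hp
    simp only [mem_coe, mem_filter] at hp
    refine Prod.ext ?_ rfl
    calc signEquiv.symm ((signEquiv D).1, (signEquiv D).1)
        = signEquiv.symm ((signEquiv D).1, (signEquiv D).2) := by rw [hp.2]
      _ = D := signEquiv.symm_apply_apply D
  · rintro ⟨E, C⟩ _
    simp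

def exchangeOddParts (p : Finset ℕ × Finset ℕ) : Finset ℕ × Finset ℕ :=
  ((parityEquiv p.2).1, parityEquiv.symm (p.1, (parityEquiv p.2).2))

theorem exchangeOddParts_exchangeOddParts (p : Finset ℕ × Finset ℕ) :
    exchangeOddParts (exchangeOddParts p) = p := by
  simp [exchangeOddParts]

theorem exchangeOddParts_mem {M : ℕ} {p : Finset ℕ × Finset ℕ} (hp : p ∈ oddDistinctPairs M) :
    exchangeOddParts p ∈ oddDistinctPairs M := by
  obtain ⟨E, C⟩ := p
  rw [mem_oddDistinctPairs, sum_succ_eq_sum_parityEquiv C] at hp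
  rw [mem_oddDistinctPairs, exchangeOddParts, sum_succ_parityEquiv_symm]
  dsimp only at hp ⊢
  omega

theorem exchangeOddParts_eq_self_iff (p : Finset ℕ × Finset ℕ) :
    exchangeOddParts p = p ↔ (parityEquiv p.2).1 = p.1 := by
  obtain ⟨E, C⟩ := p
  refine ⟨fun h => (Prod.ext_iff.1 h).1, fun h => ?_⟩
  dsimp only at h
  simp only [exchangeOddParts, ← h, Prod.mk.eta, Equiv.symm_apply_apply]

theorem card_fixed_oddDistinctPairs (M : ℕ) :
    #{p ∈ oddDistinctPairs M | exchangeOddParts p = p} =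
      if Even M then #(oddDistinctPairs (M / 2)) else 0 := by
  simp only [exchangeOddParts_eq_self_iff]
  split_ifs with hM
  · obtain ⟨K, rfl⟩ := hM
    rw [show (K + K) / 2 = K by omega]
    refine card_nbij' (fun p => (p.1, (parityEquiv p.2).2))
      (fun q => (q.1, parityEquiv.symm (q.1, q.2))) ?_ ?_ ?_ ?_
    · rintro ⟨E, C⟩ hp
      simp only [mem_coe, mem_filter, mem_oddDistinctPairs] at hp
      obtain ⟨hw, hE⟩ := hp
      rw [sum_succ_eq_sum_parityEquiv C, hE] at hw
      simp only [mem_coe, mem_oddDistinctPairs]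
      omega
    · rintro ⟨E, O⟩ hq
      simp only [mem_coe, mem_oddDistinctPairs] at hq
      simp only [mem_coe, mem_filter, mem_oddDistinctPairs, sum_succ_parityEquiv_symm,
        Equiv.apply_symm_apply, and_true]
      omega
    · rintro ⟨E, C⟩ hp
      simp only [mem_coe, mem_filter] at hp
      simp [← hp.2]
    · rintro ⟨E, O⟩ _
      simp
  · refine card_eq_zero.2 (filter_eq_empty_iff.2 fun p hp hfix => hM ?_)
    rw [mem_oddDistinctPairs, sum_succ_eq_sum_parityEquiv p.2, hfix] at hp
    exact ⟨∑ e ∈ p.1, (2 * e + 1) + ∑ j ∈ (parityEquiv p.2).2, (j + 1), by omega⟩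

theorem cast_card_oddDistinctPairs (M : ℕ) :
    (#(oddDistinctPairs M) : ZMod 2) = if M = 0 then 1 else 0 := by
  induction M using Nat.strong_induction_on with
  | _ M ih =>
    rcases eq_or_ne M 0 with rfl | hM
    · rfl
    rw [cast_card_eq_cast_card_fixed exchangeOddParts (fun _ => exchangeOddParts_mem)
      (fun p _ => exchangeOddParts_exchangeOddParts p), card_fixed_oddDistinctPairs, if_neg hM]
    split_ifs with hEven
    · rw [ih (M / 2) (by omega), if_neg (by rintro h; obtain ⟨K, rfl⟩ := hEven; omega)]
    · simp

theorem cast_card_jacobiSet_zero (M : ℤ) :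
    (#(jacobiSet 0 M) : ZMod 2) = if M = 0 then 1 else 0 := by
  rcases lt_or_ge M 0 with hM | hM
  · rw [jacobiSet_eq_empty_of_neg hM, if_neg hM.ne]; rfl
  lift M to ℕ using hM
  have hmem : ∀ p ∈ jacobiSet 0 M, (reflect p.1, p.2) ∈ jacobiSet 0 M := fun p hp => by
    rw [mem_jacobiSet] at hp ⊢
    simp only [weight, charge_reflect, energy_reflect, hp.1, neg_zero, sub_zero] at hp ⊢
    exact ⟨trivial, hp.2⟩
  rw [cast_card_eq_cast_card_fixed (fun p => (reflect p.1, p.2)) hmem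
    (fun p _ => by simp [reflect_reflect])]
  simp only [Prod.ext_iff, and_true]
  rw [card_fixed_jacobiSet_zero, cast_card_oddDistinctPairs]
  simp

theorem cast_card_jacobiSet (m M : ℤ) :
    (#(jacobiSet m M) : ZMod 2) = if 2 * M = m * (m + 1) then 1 else 0 := by
  induction m using Int.induction_on generalizing M with
  | zero => simp [cast_card_jacobiSet_zero]
  | succ i ih =>
    rw [card_jacobiSet_eq_card_jacobiSet_sub_one, add_sub_cancel_right, ih]
    exact if_congr ⟨fun h => by linear_combination h, fun h => by linear_combination h⟩ rfl rfl
  | pred i ih =>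
    have := card_jacobiSet_eq_card_jacobiSet_sub_one (-i) (M - i)
    rw [sub_neg_eq_add, sub_add_cancel] at this
    rw [← this, ih]
    exact if_congr ⟨fun h => by linear_combination h, fun h => by linear_combination h⟩ rfl rfl

/-- The monomials of `∏_{d ∈ ℤ} (1 + q ^ |4d - 1|) ∏_{k ≥ 1} (1 + q ^ (4k))` of degree `a`: the
triple product at `q ↦ q ^ 4`, `z ↦ q⁻¹`. -/
noncomputable def thetaSet (a : ℕ) : Finset (Finset ℤ × Finset ℕ) :=
  (Icc 0 (a : ℤ)).biUnion fun M => jacobiSet (4 * M - a) M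

theorem mem_thetaSet {a : ℕ} {p : Finset ℤ × Finset ℕ} :
    p ∈ thetaSet a ↔ 4 * weight p - charge p.1 = a := by
  simp only [thetaSet, mem_biUnion, mem_Icc, mem_jacobiSet]
  refine ⟨fun ⟨M, _, hc, hw⟩ => by omega, fun h => ⟨weight p, ?_, by omega, rfl⟩⟩
  have := charge_le_weight p
  have := weight_nonneg p
  omega

theorem cast_card_thetaSet (a : ℕ) :
    (#(thetaSet a) : ZMod 2) =
      #{M ∈ Icc (0 : ℤ) a | 2 * M = (4 * M - (a : ℤ)) * (4 * M - a + 1)} := by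
  rw [thetaSet, card_biUnion, Nat.cast_sum, ← sum_boole]
  · exact sum_congr rfl fun M _ => cast_card_jacobiSet _ _
  · intro M _ M' _ hMM'
    refine disjoint_left.2 fun p hp hp' => hMM' ?_
    rw [← (mem_jacobiSet.1 hp).2, (mem_jacobiSet.1 hp').2]

theorem four_mul_add_one_sq_of_two_mul_eq {a : ℕ} {M : ℤ}
    (h : 2 * M = (4 * M - a) * (4 * M - a + 1)) : (4 * (4 * M - a) + 1) ^ 2 = 8 * a + 1 := by
  linear_combination (-16) * h

theorem exists_two_mul_eq_mul_add_one_iff (a : ℕ) :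
    (∃ M ∈ Icc (0 : ℤ) a, 2 * M = (4 * M - (a : ℤ)) * (4 * M - a + 1)) ↔
      ∃ m : ℕ, Odd m ∧ m ^ 2 = 8 * a + 1 := by
  constructor
  · rintro ⟨M, -, hM⟩
    refine ⟨(4 * (4 * M - a) + 1).natAbs, Int.natAbs_odd.2 ⟨2 * (4 * M - a), by ring⟩, ?_⟩
    zify
    rw [sq_abs]
    exact four_mul_add_one_sq_of_two_mul_eq hM
  · rintro ⟨m, ⟨k, rfl⟩, hm⟩
    obtain ⟨j, hj⟩ : ∃ j : ℤ, (2 * k + 1 : ℤ) ^ 2 = (4 * j + 1) ^ 2 := by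
      rcases Nat.even_or_odd k with ⟨t, rfl⟩ | ⟨t, rfl⟩
      · exact ⟨t, by push_cast; ring⟩
      · exact ⟨-t - 1, by push_cast; ring⟩
    have ha : (a : ℤ) = 2 * j ^ 2 + j := by
      have : ((2 * k + 1) ^ 2 : ℤ) = 8 * a + 1 := by exact_mod_cast hm
      linarith
    obtain ⟨r, hr⟩ := Int.even_mul_succ_self j
    exact ⟨r, mem_Icc.2 ⟨by nlinarith, by nlinarith⟩, by rw [ha]; nlinarith⟩

theorem cast_card_filter_eq_one_iff_exists_odd_sq (a : ℕ) :
    (#{M ∈ Icc (0 : ℤ) a | 2 * M = (4 * M - (a : ℤ)) * (4 * M - a + 1)} : ZMod 2) = 1 ↔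
      ∃ m : ℕ, Odd m ∧ m ^ 2 = 8 * a + 1 := by
  rw [← exists_two_mul_eq_mul_add_one_iff, ← filter_nonempty_iff, ← card_pos]
  have hle : #{M ∈ Icc (0 : ℤ) a | 2 * M = (4 * M - (a : ℤ)) * (4 * M - a + 1)} ≤ 1 := by
    refine card_le_one.2 fun M hM M' hM' => ?_
    have h := four_mul_add_one_sq_of_two_mul_eq (mem_filter.1 hM).2
    have h' := four_mul_add_one_sq_of_two_mul_eq (mem_filter.1 hM').2
    have : (M - M') * (8 * (M + M') - 4 * a + 1) = 0 :=
      mul_left_cancel₀ (by norm_num : (32 : ℤ) ≠ 0) (by linear_combination h - h')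
    rcases mul_eq_zero.1 this with h0 | h0 <;> omega
  interval_cases #{M ∈ Icc (0 : ℤ) a | 2 * M = (4 * M - (a : ℤ)) * (4 * M - a + 1)} <;> decide

def oddPartsEquiv : Finset ℕ ≃ Finset ℤ :=
  (parityEquiv.trans (Equiv.prodComm _ _)).trans signEquiv.symm

theorem four_mul_energy_sub_charge_oddPartsEquiv (E : Finset ℕ) :
    4 * energy (oddPartsEquiv E) - charge (oddPartsEquiv E) = ∑ e ∈ E, (2 * (e : ℤ) + 1) := by
  simp only [oddPartsEquiv, Equiv.trans_apply, Equiv.prodComm_apply, Prod.swap,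
    energy_signEquiv_symm, charge_signEquiv_symm, card_eq_sum_ones, Nat.cast_sum, Nat.cast_one]
  have h₁ : ∑ i ∈ (parityEquiv E).1, (2 * ((2 * i : ℕ) : ℤ) + 1) =
      4 * ∑ i ∈ (parityEquiv E).1, (i : ℤ) + ∑ _i ∈ (parityEquiv E).1, 1 := by
    rw [mul_sum, ← sum_add_distrib]; exact sum_congr rfl fun _ _ => by push_cast; ring
  have h₂ : ∑ i ∈ (parityEquiv E).2, (2 * ((2 * i + 1 : ℕ) : ℤ) + 1) =
      4 * ∑ i ∈ (parityEquiv E).2, ((i : ℤ) + 1) - ∑ _i ∈ (parityEquiv E).2, 1 := by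
    rw [mul_sum, ← sum_sub_distrib]; exact sum_congr rfl fun _ _ => by push_cast; ring
  rw [sum_eq_sum_parityEquiv E, h₁, h₂]
  ring

theorem card_fixed_tauPairs (a : ℕ) :
    #{p ∈ tauPairs (8 * a + 1) | exchangeEvenParts p = p} = #(thetaSet a) := by
  simp only [exchangeEvenParts_eq_self_iff]
  refine card_nbij' (fun p => (oddPartsEquiv (parityEquiv p.1).1, p.2))
    (fun q => (parityEquiv.symm (oddPartsEquiv.symm q.1, q.2), q.2)) ?_ ?_ ?_ ?_
  · rintro ⟨A, B⟩ hp
    simp only [mem_coe, mem_filter, mem_tauPairs] at hp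
    obtain ⟨hw, hB⟩ := hp
    rw [sum_succ_eq_sum_parityEquiv A, hB] at hw
    have := four_mul_energy_sub_charge_oddPartsEquiv (parityEquiv A).1
    simp only [mem_coe, mem_thetaSet, weight]
    zify at hw
    linarith
  · rintro ⟨D, C⟩ hq
    simp only [mem_coe, mem_thetaSet, weight] at hq
    have := four_mul_energy_sub_charge_oddPartsEquiv (oddPartsEquiv.symm D)
    rw [Equiv.apply_symm_apply] at this
    simp only [mem_coe, mem_filter, mem_tauPairs, sum_succ_parityEquiv_symm,
      Equiv.apply_symm_apply, and_true]
    zify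
    linarith
  · rintro ⟨A, B⟩ hp
    simp only [mem_coe, mem_filter] at hp
    refine Prod.ext ?_ rfl
    calc parityEquiv.symm (oddPartsEquiv.symm (oddPartsEquiv (parityEquiv A).1), B)
        = parityEquiv.symm ((parityEquiv A).1, (parityEquiv A).2) := by rw [hp.2]; simp
      _ = A := parityEquiv.symm_apply_apply A
  · rintro ⟨D, C⟩ _
    simp

theorem sq_mod_eight_of_odd {m : ℕ} (hm : Odd m) : m ^ 2 % 8 = 1 := by
  obtain ⟨k, rfl⟩ := hm
  obtain ⟨r, hr⟩ := Nat.even_mul_succ_self k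
  have : (2 * k + 1) ^ 2 = 4 * (k * (k + 1)) + 1 := by ring
  omega

theorem cast_card_tauPairs_eq_one_iff (n : ℕ) :
    (#(tauPairs n) : ZMod 2) = 1 ↔ ∃ m : ℕ, Odd m ∧ m ^ 2 = n := by
  by_cases hn : n % 8 = 1
  · obtain ⟨a, rfl⟩ : ∃ a, n = 8 * a + 1 := ⟨n / 8, by omega⟩
    rw [cast_card_eq_cast_card_fixed exchangeEvenParts (fun _ => exchangeEvenParts_mem)
      (fun p _ => exchangeEvenParts_exchangeEvenParts p), card_fixed_tauPairs, cast_card_thetaSet,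
      cast_card_filter_eq_one_iff_exists_odd_sq]
  · have hempty : tauPairs n = ∅ :=
      eq_empty_of_forall_notMem fun p hp => hn (by rw [mem_tauPairs] at hp; omega)
    rw [hempty, card_empty, Nat.cast_zero]
    exact ⟨fun h => absurd h (by decide),
      fun ⟨m, hm, hmn⟩ => absurd (hmn ▸ sq_mod_eight_of_odd hm) hn⟩

end RamanujanTau

/-- `τ(n)` is odd if and only if `n` is an odd perfect square. -/
theorem tau_odd_iff (n : ℕ) : Odd (tau n) ↔ ∃ m : ℕ, Odd m ∧ m ^ 2 = n := by
  rw [← ZMod.intCast_eq_one_iff_odd, RamanujanTau.intCast_tau_eq_card_tauPairs,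
    RamanujanTau.cast_card_tauPairs_eq_one_iff]
end

section
/- Let l be a prime with Legendre symbol (-6/l) = -1. If n is a positive integer coprime to l, then the equation 24ln + l^2 = 24k^2 + m^2 has no solutions in integers k and positive integers m. -/
/-!
Reduce modulo `l`: `24k² + m² ≡ 0`. If `l ∤ k`, then `-6 ≡ (m/(2k))²` is a square modulo `l`,
contradicting `(-6/l) = -1`. Hence `l ∣ k` and `l ∣ m`, so `l² ∣ 24ln + l²`, i.e. `l ∣ 24n`;
but `l ∤ 24` because `(-6/l) ≠ 0` and `l ≠ 2`, and `l ∤ n` by coprimality.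
-/

namespace legendreSym

variable {p : ℕ} [Fact p.Prime]

theorem ne_two_of_eq_neg_one {a : ℤ} (h : legendreSym p a = -1) : p ≠ 2 := by
  rintro rfl
  exact eq_neg_one_iff 2 |>.mp h <| FiniteField.isSquare_of_char_two (ZMod.ringChar_zmod_n 2) _

theorem two_ne_zero_of_eq_neg_one {a : ℤ} (h : legendreSym p a = -1) : (2 : ZMod p) ≠ 0 := by
  intro h2
  refine ne_two_of_eq_neg_one h <| (Nat.prime_dvd_prime_iff_eq Fact.out Nat.prime_two).mp ?_
  exact (ZMod.natCast_eq_zero_iff 2 p).mp (by exact_mod_cast h2)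

theorem not_dvd_four_mul_of_neg_eq_neg_one {d : ℤ} (hd : legendreSym p (-d) = -1) :
    ¬ (p : ℤ) ∣ 4 * d := by
  have hd0 : (d : ZMod p) ≠ 0 := by
    intro h
    have := (eq_zero_iff p (-d)).mpr (by push_cast; rw [h, neg_zero])
    omega
  have h2 := two_ne_zero_of_eq_neg_one hd
  rw [← ZMod.intCast_zmod_eq_zero_iff_dvd]
  push_cast
  rw [show (4 : ZMod p) = 2 * 2 by norm_num]
  exact mul_ne_zero (mul_ne_zero h2 h2) hd0

theorem dvd_and_dvd_of_dvd_four_mul_sq_add_sq {d k m : ℤ} (hd : legendreSym p (-d) = -1)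
    (h : (p : ℤ) ∣ 4 * d * k ^ 2 + m ^ 2) : (p : ℤ) ∣ k ∧ (p : ℤ) ∣ m := by
  simp only [← ZMod.intCast_zmod_eq_zero_iff_dvd] at h ⊢
  push_cast at h
  have hk : (k : ZMod p) = 0 := by
    by_contra hk
    have h2k : (2 * k : ZMod p) ≠ 0 := mul_ne_zero (two_ne_zero_of_eq_neg_one hd) hk
    refine eq_neg_one_iff p |>.mp hd ⟨m / (2 * k), ?_⟩
    push_cast
    rw [div_mul_div_comm, eq_div_iff (mul_ne_zero h2k h2k)]
    linear_combination -h
  refine ⟨hk, ?_⟩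
  rw [hk] at h
  exact pow_eq_zero_iff two_ne_zero |>.mp (by simpa using h)

end legendreSym

theorem no_solutions_one_general (l : ℕ) [Fact l.Prime] (hleg : legendreSym l (-6) = -1)
    (n : ℕ) (hcop : Nat.Coprime n l) (k m : ℤ) :
    24 * (l : ℤ) * n + (l : ℤ) ^ 2 ≠ 24 * k ^ 2 + m ^ 2 := by
  intro heq
  have hl0 : (l : ℤ) ≠ 0 := by exact_mod_cast (Fact.out : l.Prime).ne_zero
  obtain ⟨⟨k, rfl⟩, ⟨m, rfl⟩⟩ := legendreSym.dvd_and_dvd_of_dvd_four_mul_sq_add_sq hleg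
    (k := k) (m := m) ⟨24 * n + l, by linear_combination -heq⟩
  have hl24n : (l : ℤ) ∣ 24 * n :=
    ⟨24 * k ^ 2 + m ^ 2 - 1, mul_left_cancel₀ hl0 (by linear_combination heq)⟩
  have hl24 : l ∣ 24 := hcop.symm.dvd_of_dvd_mul_right (by exact_mod_cast hl24n)
  exact legendreSym.not_dvd_four_mul_of_neg_eq_neg_one hleg (by exact_mod_cast hl24)

/-- If `(-6/l) = -1` and `n` is a positive integer coprime to `l`, then
`24ln + l² = 24k² + m²` has no solutions with `k ∈ ℤ` and `m` a positive integer. -/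
theorem no_solutions_one (l : ℕ) [Fact l.Prime] (hleg : legendreSym l (-6) = -1)
    (n : ℕ) (hn : 0 < n) (hcop : Nat.Coprime n l) (k m : ℤ) (hm : 0 < m) :
    24 * (l : ℤ) * n + (l : ℤ) ^ 2 ≠ 24 * k ^ 2 + m ^ 2 :=
  no_solutions_one_general l hleg n hcop k m
end

section
/- Let l be a prime with Legendre symbol (-6/l) = -1. If n is a positive integer coprime to l, then the equation 8ln + 3l^2 = 3(2k+1)^2 + 8m^2 has no solutions in integers k, m. -/
/-!
Multiplying by 3, the equation says `x² + 6y² = l (24n + 9l)` with `x = 3(2k+1)`, `y = 2m`.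
Since `-6` is a non-residue mod `l`, `l` divides both `x` and `y`, so `l² ∣ l (24n + 9l)`,
i.e. `l ∣ 24n`. But `l ∤ 6` (the Legendre symbol would vanish), so `l ∣ n`, contradicting
`gcd(n, l) = 1`.
-/

namespace legendreSym

variable {p : ℕ} [Fact p.Prime] {a : ℤ}

theorem not_dvd_of_eq_neg_one (h : legendreSym p a = -1) : ¬(p : ℤ) ∣ a := by
  intro hdvd
  rw [(eq_zero_iff p a).mpr ((ZMod.intCast_zmod_eq_zero_iff_dvd a p).mpr hdvd)] at h
  exact absurd h (by decide)

theorem sq_dvd_of_eq_neg_one (h : legendreSym p a = -1) {x y : ℤ}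
    (hxy : (p : ℤ) ∣ x ^ 2 - a * y ^ 2) : (p : ℤ) ^ 2 ∣ x ^ 2 - a * y ^ 2 := by
  obtain ⟨hx, hy⟩ := prime_dvd_of_eq_neg_one h hxy
  exact dvd_sub (pow_dvd_pow_of_dvd hx 2) (dvd_mul_of_dvd_right (pow_dvd_pow_of_dvd hy 2) a)

end legendreSym

theorem no_solutions_two_general (l : ℕ) [Fact l.Prime] (hleg : legendreSym l (-6) = -1)
    (n : ℕ) (hcop : Nat.Coprime n l) (k m : ℤ) :
    8 * (l : ℤ) * n + 3 * (l : ℤ) ^ 2 ≠ 3 * (2 * k + 1) ^ 2 + 8 * m ^ 2 := by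
  intro h
  have hl : Prime (l : ℤ) := Nat.prime_iff_prime_int.mp Fact.out
  have hform : (3 * (2 * k + 1)) ^ 2 - (-6) * (2 * m) ^ 2 = (l : ℤ) * (24 * n + 9 * l) := by
    linear_combination -3 * h
  have hsq := legendreSym.sq_dvd_of_eq_neg_one hleg (hform ▸ dvd_mul_right _ _)
  rw [hform, sq, mul_dvd_mul_iff_left hl.ne_zero] at hsq
  have h24n : (l : ℤ) ∣ 24 * n := (dvd_add_left (dvd_mul_left _ 9)).mp hsq
  have h24 : ¬(l : ℤ) ∣ 24 := fun hd =>
    legendreSym.not_dvd_of_eq_neg_one hleg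
      (hl.dvd_of_dvd_pow (n := 3) (hd.trans ⟨-9, by norm_num⟩))
  have hln : l ∣ n := Int.natCast_dvd_natCast.mp ((hl.dvd_or_dvd h24n).resolve_left h24)
  exact (Nat.Prime.coprime_iff_not_dvd Fact.out).mp hcop.symm hln

/-- If `(-6/l) = -1` and `n` is a positive integer coprime to `l`, then
`8ln + 3l² = 3(2k+1)² + 8m²` has no integer solutions `k, m`. -/
theorem no_solutions_two (l : ℕ) [Fact l.Prime] (hleg : legendreSym l (-6) = -1)
    (n : ℕ) (hn : 0 < n) (hcop : Nat.Coprime n l) (k m : ℤ) :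
    8 * (l : ℤ) * n + 3 * (l : ℤ) ^ 2 ≠ 3 * (2 * k + 1) ^ 2 + 8 * m ^ 2 :=
  no_solutions_two_general l hleg n hcop k m
end

section
/- The Jacobi-type identity (q;q)_∞^2 / (q^2;q^2)_∞ = ∑_{k=-∞}^{∞} (-1)^k q^{k^2} holds as formal power series. -/
open PowerSeries in
/-- The theta series `∑_{k∈ℤ} (-1)^k q^{k²}`. -/
noncomputable def thetaSeries : PowerSeries ℤ :=
  PowerSeries.mk fun n => ∑ k ∈ Finset.Icc (-(n : ℤ)) (n : ℤ),
    if k ^ 2 = (n : ℤ) then ((-1 : ℤˣ) ^ k : ℤˣ) else 0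

/-!
Since `(q;q)_∞ = (q;q²)_∞ (q²;q²)_∞`, the claim is `(q;q²)_∞² (q²;q²)_∞ = ∑ (-1)^k q^{k²}`.
The `q`-binomial theorem in base `q²` gives the finite identity
`(q;q²)_n² = ∑_{|j| ≤ n} (-1)^j q^{j²} [2n, n+j]_{q²}`. The Gaussian binomial is
`(q²;q²)_{2n} / ((q²;q²)_{n+j} (q²;q²)_{n-j})`, and modulo `q^{2t+2}` the product `(q²;q²)_k` does
not depend on `k ≥ t`; with `t = n - |j|` and `j² + 2t + 2 > n`, each term `q^{j²} [2n, n+j]_{q²}`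
may therefore be replaced by `q^{j²} / (q²;q²)_n` modulo `q^n`.
-/

open PowerSeries Finset

section QAnalogues

variable {A : Type*} [CommRing A] (x : A)

theorem smodEq_span_singleton_iff {a b c : A} : a ≡ b [SMOD Ideal.span {c}] ↔ c ∣ a - b := by
  rw [SModEq.sub_mem, Ideal.mem_span_singleton]

noncomputable def qPochhammer (k : ℕ) : A := ∏ i ∈ range k, (1 - x ^ (i + 1))

def gaussBinom : ℕ → ℕ → A
  | _, 0 => 1
  | 0, _ + 1 => 0
  | m + 1, k + 1 => gaussBinom m (k + 1) + x ^ (m - k) * gaussBinom m k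

@[simp]
theorem gaussBinom_zero_right (m : ℕ) : gaussBinom x m 0 = 1 := by
  cases m <;> rfl

theorem gaussBinom_succ_succ (m k : ℕ) :
    gaussBinom x (m + 1) (k + 1) = gaussBinom x m (k + 1) + x ^ (m - k) * gaussBinom x m k := rfl

theorem gaussBinom_eq_zero_of_lt : ∀ {m k : ℕ}, m < k → gaussBinom x m k = 0
  | 0, _ + 1, _ => rfl
  | m + 1, k + 1, h => by
    rw [gaussBinom_succ_succ, gaussBinom_eq_zero_of_lt (by omega),
      gaussBinom_eq_zero_of_lt (by omega), mul_zero, add_zero]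

@[simp]
theorem gaussBinom_self (m : ℕ) : gaussBinom x m m = 1 := by
  induction m with
  | zero => rfl
  | succ m ih => rw [gaussBinom_succ_succ, gaussBinom_eq_zero_of_lt x m.lt_succ_self, ih]; simp

theorem qPochhammer_succ (k : ℕ) : qPochhammer x (k + 1) = qPochhammer x k * (1 - x ^ (k + 1)) :=
  prod_range_succ _ _

theorem gaussBinom_add_mul_qPochhammer_mul_qPochhammer :
    ∀ a b : ℕ, gaussBinom x (a + b) a * (qPochhammer x a * qPochhammer x b) = qPochhammer x (a + b)
  | 0, b => by simp [qPochhammer]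
  | a + 1, 0 => by simp [qPochhammer]
  | a + 1, b + 1 => by
    have h₁ := gaussBinom_add_mul_qPochhammer_mul_qPochhammer (a + 1) b
    have h₂ := gaussBinom_add_mul_qPochhammer_mul_qPochhammer a (b + 1)
    rw [show a + 1 + b = a + b + 1 by omega] at h₁
    rw [show a + (b + 1) = a + b + 1 by omega] at h₂
    rw [show a + 1 + (b + 1) = a + b + 1 + 1 by omega, gaussBinom_succ_succ,
      show a + b + 1 - a = b + 1 by omega, qPochhammer_succ x (a + b + 1),
      qPochhammer_succ x a, qPochhammer_succ x b]
    rw [qPochhammer_succ] at h₁ h₂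
    linear_combination (1 - x ^ (b + 1)) * h₁ + x ^ (b + 1) * (1 - x ^ (a + 1)) * h₂
termination_by a b => a + b

/-- The `q`-binomial theorem, in homogeneous form. -/
theorem prod_add_mul_pow_eq_sum_gaussBinom (y z : A) (m : ℕ) :
    ∏ i ∈ range m, (y + z * x ^ i) =
      ∑ k ∈ range (m + 1), x ^ k.choose 2 * gaussBinom x m k * z ^ k * y ^ (m - k) := by
  induction m with
  | zero => simp
  | succ m ih =>
    have hy : y * ∑ k ∈ range (m + 1), x ^ k.choose 2 * gaussBinom x m k * z ^ k * y ^ (m - k) =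
        ∑ k ∈ range (m + 2), x ^ k.choose 2 * gaussBinom x m k * z ^ k * y ^ (m + 1 - k) := by
      rw [sum_range_succ _ (m + 1), gaussBinom_eq_zero_of_lt x m.lt_succ_self, mul_sum]
      simp only [mul_zero, zero_mul, add_zero]
      refine sum_congr rfl fun k hk => ?_
      rw [show m + 1 - k = m - k + 1 by grind, pow_succ]
      ring
    have hz : z * x ^ m *
          ∑ k ∈ range (m + 1), x ^ k.choose 2 * gaussBinom x m k * z ^ k * y ^ (m - k) =
        ∑ k ∈ range (m + 1), x ^ (k + 1).choose 2 * (x ^ (m - k) * gaussBinom x m k) * z ^ (k + 1) *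
          y ^ (m + 1 - (k + 1)) := by
      rw [mul_sum]
      refine sum_congr rfl fun k hk => ?_
      have hx : x ^ k * x ^ (m - k) = x ^ m := by
        rw [← pow_add, Nat.add_sub_cancel' (by grind)]
      rw [Nat.choose_succ_succ, Nat.choose_one_right, Nat.add_sub_add_right]
      linear_combination -(x ^ k.choose 2 * gaussBinom x m k * z ^ (k + 1) * y ^ (m - k)) * hx
    rw [prod_range_succ, ih, mul_add, mul_comm _ y, hy, mul_comm _ (z * _), hz,
      sum_range_succ' _ (m + 1), sum_range_succ' _ (m + 1)]
    simp only [gaussBinom_succ_succ, gaussBinom_zero_right]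
    rw [← add_rotate, ← sum_add_distrib]
    refine congrArg₂ _ (sum_congr rfl fun k _ => ?_) rfl
    ring

theorem qPochhammer_smodEq {t k : ℕ} (h : t ≤ k) :
    qPochhammer x k ≡ qPochhammer x t [SMOD Ideal.span {x ^ (t + 1)}] := by
  have hfactor : ∀ i ∈ Ico t k, 1 - x ^ (i + 1) ≡ 1 [SMOD Ideal.span {x ^ (t + 1)}] := by
    intro i hi
    rw [smodEq_span_singleton_iff, sub_sub_cancel_left, dvd_neg]
    exact pow_dvd_pow x (by rw [mem_Ico] at hi; omega)
  rw [qPochhammer, qPochhammer, ← prod_range_mul_prod_Ico _ h]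
  simpa using SModEq.rfl.mul (SModEq.prod hfactor)

theorem gaussBinom_add_mul_qPochhammer_smodEq_one {t a b c : ℕ} (ha : t ≤ a) (hb : t ≤ b)
    (hc : t ≤ c) :
    gaussBinom x (a + b) a * qPochhammer x c ≡ 1 [SMOD Ideal.span {x ^ (t + 1)}] := by
  set π := Ideal.Quotient.mk (Ideal.span {x ^ (t + 1)})
  have hq : ∀ k, t ≤ k → π (qPochhammer x k) = π (qPochhammer x t) := fun k hk =>
    SModEq.idealQuotientMk.mp (qPochhammer_smodEq x hk)
  -- `x` is nilpotent modulo `x ^ (t + 1)`, so each factor `1 - x ^ (i + 1)` becomes a unit.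
  have hu : IsUnit (π (qPochhammer x t)) := by
    rw [qPochhammer, map_prod, IsUnit.prod_iff]
    intro i _
    rw [map_sub, map_one]
    refine IsNilpotent.isUnit_one_sub ⟨t + 1, ?_⟩
    rw [← map_pow, Ideal.Quotient.eq_zero_iff_mem, Ideal.mem_span_singleton, pow_right_comm]
    exact dvd_pow_self _ i.succ_ne_zero
  have hprod := congrArg π (gaussBinom_add_mul_qPochhammer_mul_qPochhammer x a b)
  rw [map_mul, map_mul, hq a ha, hq b hb, hq (a + b) (by omega)] at hprod
  rw [SModEq.idealQuotientMk, map_mul, map_one, hq c hc]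
  exact hu.mul_left_cancel (by linear_combination hprod)

theorem qPochhammer_two_mul (n : ℕ) :
    qPochhammer x (2 * n) = (∏ i ∈ range n, (1 - x ^ (2 * i + 1))) * qPochhammer (x ^ 2) n := by
  induction n with
  | zero => simp [qPochhammer]
  | succ n ih =>
    rw [show 2 * (n + 1) = 2 * n + 1 + 1 by ring, qPochhammer_succ, qPochhammer_succ, ih,
      prod_range_succ, qPochhammer_succ]
    ring

end QAnalogues

section PowerSeries

variable {R : Type*} [CommRing R]

theorem prod_X_pow_sub_X_pow (n : ℕ) :
    ∏ i ∈ range (2 * n), (X ^ (2 * n + 1) - X ^ (2 * i + 2) : R⟦X⟧) =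
      (-1) ^ n * X ^ (3 * n ^ 2 + 2 * n) * (∏ i ∈ range n, (1 - X ^ (2 * i + 1))) ^ 2 := by
  have hlow : ∀ i ∈ range n, (X ^ (2 * n + 1) - X ^ (2 * (n - 1 - i) + 2) : R⟦X⟧) =
      -1 * X ^ (2 * (n - 1 - i) + 2) * (1 - X ^ (2 * i + 1)) := by
    intro i hi
    have h : X ^ (2 * (n - 1 - i) + 2) * X ^ (2 * i + 1) = (X ^ (2 * n + 1) : R⟦X⟧) := by
      rw [mem_range] at hi
      rw [← pow_add]
      congr 1
      omega
    linear_combination -h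
  have hup : ∀ i ∈ range n, (X ^ (2 * n + 1) - X ^ (2 * (n + i) + 2) : R⟦X⟧) =
      X ^ (2 * n + 1) * (1 - X ^ (2 * i + 1)) := fun i _ => by ring
  have hpow : ∀ m, ∏ i ∈ range m, (X ^ (2 * i + 2) : R⟦X⟧) = X ^ (m * (m + 1)) := by
    intro m
    induction m with
    | zero => simp
    | succ m ih => rw [prod_range_succ, ih, ← pow_add]; ring_nf
  have hsplit := prod_range_add (fun i => (X ^ (2 * n + 1) - X ^ (2 * i + 2) : R⟦X⟧)) n n
  rw [← two_mul] at hsplit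
  rw [hsplit, ← prod_range_reflect, prod_congr rfl hlow, prod_congr rfl hup,
    prod_mul_distrib, prod_mul_distrib, prod_mul_distrib,
    prod_range_reflect (fun i => X ^ (2 * i + 2)), hpow]
  simp only [prod_const, card_range]
  ring

theorem sq_prod_one_sub_X_pow_odd (n : ℕ) :
    (∏ i ∈ range n, (1 - X ^ (2 * i + 1) : R⟦X⟧)) ^ 2 =
      ∑ j ∈ Icc (-(n : ℤ)) n,
        (-1) ^ j.natAbs * X ^ (j.natAbs ^ 2) * gaussBinom (X ^ 2) (2 * n) (n + j).toNat := by
  -- Both sides of this instance of the `q`-binomial theorem carry the factor `(-1)^n X^(3n² + 2n)`.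
  have hq := prod_add_mul_pow_eq_sum_gaussBinom (X ^ 2 : R⟦X⟧) (X ^ (2 * n + 1)) (-X ^ 2) (2 * n)
  rw [prod_congr rfl fun i _ => show X ^ (2 * n + 1) + -X ^ 2 * (X ^ 2) ^ i =
    (X ^ (2 * n + 1) - X ^ (2 * i + 2) : R⟦X⟧) by ring, prod_X_pow_sub_X_pow] at hq
  have hsum : ∀ k ∈ range (2 * n + 1), (X ^ 2 : R⟦X⟧) ^ k.choose 2 * gaussBinom (X ^ 2) (2 * n) k *
        (-X ^ 2) ^ k * (X ^ (2 * n + 1)) ^ (2 * n - k) =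
      (-1) ^ n * X ^ (3 * n ^ 2 + 2 * n) * ((-1) ^ ((k : ℤ) - n).natAbs *
        X ^ (((k : ℤ) - n).natAbs ^ 2) * gaussBinom (X ^ 2) (2 * n) (n + ((k : ℤ) - n)).toNat) := by
    intro k hk
    rw [mem_range] at hk
    have hsign : (-1 : R⟦X⟧) ^ k = (-1) ^ n * (-1) ^ ((k : ℤ) - n).natAbs := by
      rw [← pow_add, show n + ((k : ℤ) - n).natAbs = k + 2 * (n - k) by omega, pow_add, pow_mul]
      simp
    have hexp : 2 * k.choose 2 + 2 * k + (2 * n + 1) * (2 * n - k) =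
        3 * n ^ 2 + 2 * n + ((k : ℤ) - n).natAbs ^ 2 := by
      have h2 : 2 * (k + 1).choose 2 = (k + 1) * k := by
        rw [Nat.choose_two_right, Nat.mul_div_cancel' (Nat.even_mul_pred_self _).two_dvd,
          Nat.add_sub_cancel]
      rw [Nat.choose_succ_succ, Nat.choose_one_right] at h2
      zify [show k ≤ 2 * n by omega] at h2 ⊢
      rw [sq_abs]
      linear_combination h2
    rw [show ((n : ℤ) + ((k : ℤ) - n)).toNat = k by omega]
    calc _ = (-1 : R⟦X⟧) ^ k * X ^ (2 * k.choose 2 + 2 * k + (2 * n + 1) * (2 * n - k)) *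
          gaussBinom (X ^ 2) (2 * n) k := by ring
      _ = _ := by rw [hsign, hexp]; ring
  have hreindex : ∑ k ∈ range (2 * n + 1), (-1 : R⟦X⟧) ^ ((k : ℤ) - n).natAbs *
        X ^ (((k : ℤ) - n).natAbs ^ 2) * gaussBinom (X ^ 2) (2 * n) (n + ((k : ℤ) - n)).toNat =
      ∑ j ∈ Icc (-(n : ℤ)) n,
        (-1) ^ j.natAbs * X ^ (j.natAbs ^ 2) * gaussBinom (X ^ 2) (2 * n) (n + j).toNat :=
    sum_nbij' (fun k => (k : ℤ) - n) (fun j => (n + j).toNat)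
      (fun k hk => by rw [mem_range] at hk; rw [mem_Icc]; omega)
      (fun j hj => by rw [mem_Icc] at hj; rw [mem_range]; omega)
      (fun k _ => by simp only [add_sub_cancel, Int.toNat_natCast])
      (fun j hj => by rw [mem_Icc] at hj; omega) (fun _ _ => rfl)
  rw [sum_congr rfl hsum, ← mul_sum, hreindex, mul_assoc, mul_assoc] at hq
  exact X_pow_mul_cancel ((isUnit_neg_one.pow n).mul_left_cancel hq)

theorem coeff_eq_of_smodEq_X_pow {f g : R⟦X⟧} {n m : ℕ} (h : f ≡ g [SMOD Ideal.span {X ^ n}])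
    (hm : m < n) : coeff m f = coeff m g := by
  rw [smodEq_span_singleton_iff, X_pow_dvd_iff] at h
  exact sub_eq_zero.mp (by simpa using h m hm)

noncomputable def partialTheta (n : ℕ) : R⟦X⟧ :=
  ∑ j ∈ Icc (-(n : ℤ)) n, (-1) ^ j.natAbs * X ^ (j.natAbs ^ 2)

theorem sq_prod_one_sub_X_pow_odd_mul_qPochhammer_smodEq (n : ℕ) :
    (∏ i ∈ range n, (1 - X ^ (2 * i + 1) : R⟦X⟧)) ^ 2 * qPochhammer (X ^ 2) n ≡
      partialTheta n [SMOD Ideal.span {X ^ n}] := by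
  rw [sq_prod_one_sub_X_pow_odd, partialTheta, sum_mul]
  refine SModEq.sum fun j hj => ?_
  rw [mem_Icc] at hj
  have hbinom := gaussBinom_add_mul_qPochhammer_smodEq_one (X ^ 2 : R⟦X⟧)
    (t := n - j.natAbs) (a := (n + j).toNat) (b := (n - j).toNat) (c := n)
    (by omega) (by omega) (by omega)
  rw [show (n + j).toNat + (n - j).toNat = 2 * n by omega, ← pow_mul,
    smodEq_span_singleton_iff] at hbinom
  have hj' : j.natAbs ≤ n := by omega
  rw [smodEq_span_singleton_iff]
  have hexp : X ^ n ∣ (X ^ (j.natAbs ^ 2) * X ^ (2 * (n - j.natAbs + 1)) : R⟦X⟧) := by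
    rw [← pow_add]
    exact pow_dvd_pow X (by nlinarith [Nat.sub_add_cancel hj'])
  rw [show ∀ s a b c : R⟦X⟧, s * a * b * c - s * a = s * (a * (b * c - 1)) by intros; ring]
  exact hexp.trans (dvd_mul_of_dvd_right (mul_dvd_mul_left _ hbinom) _)

end PowerSeries

theorem thetaSeries_smodEq_partialTheta (n : ℕ) :
    thetaSeries ≡ partialTheta n [SMOD Ideal.span {X ^ n}] := by
  rw [smodEq_span_singleton_iff, X_pow_dvd_iff]
  intro m hm
  rw [map_sub, sub_eq_zero, thetaSeries, coeff_mk, partialTheta, map_sum]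
  have hterm : ∀ j : ℤ, coeff m ((-1 : ℤ⟦X⟧) ^ j.natAbs * X ^ (j.natAbs ^ 2)) =
      if j ^ 2 = m then (((-1 : ℤˣ) ^ j : ℤˣ) : ℤ) else 0 := by
    intro j
    have hsign : (((-1 : ℤˣ) ^ j : ℤˣ) : ℤ) = (-1) ^ j.natAbs := Int.coe_negOnePow ℤ j
    rw [show (-1 : ℤ⟦X⟧) ^ j.natAbs = C ((-1) ^ j.natAbs) by simp, coeff_C_mul_X_pow, hsign]
    refine if_congr ?_ rfl rfl
    rw [← Int.natAbs_sq]
    exact_mod_cast eq_comm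
  rw [sum_congr rfl fun j _ => hterm j]
  refine sum_subset (Icc_subset_Icc (by omega) (by omega)) fun j _ hj => if_neg fun hsq => hj ?_
  rw [mem_Icc]
  constructor <;> nlinarith

/-- The Jacobi-type identity `(q;q)_∞² / (q²;q²)_∞ = ∑_{k∈ℤ} (-1)^k q^{k²}`,
stated with the denominator cleared; since factors `(1 - q^j)` with `j > N` do not
affect the coefficient of `q^N`, the products may be truncated. -/
theorem jacobi_type_identity (N : ℕ) :
    PowerSeries.coeff (R := ℤ) N
        ((∏ j ∈ Finset.range (N + 1), (1 - PowerSeries.X ^ (j + 1))) ^ 2) =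
      PowerSeries.coeff (R := ℤ) N
        (thetaSeries * ∏ j ∈ Finset.range (N + 1),
          (1 - PowerSeries.X ^ (2 * (j + 1)))) := by
  have hD : ∏ j ∈ range (N + 1), (1 - X ^ (2 * (j + 1)) : ℤ⟦X⟧) = qPochhammer (X ^ 2) (N + 1) := by
    simp only [qPochhammer, pow_mul]
  have hP : qPochhammer X (N + 1) ≡ (∏ i ∈ range (N + 1), (1 - X ^ (2 * i + 1))) *
      qPochhammer (X ^ 2) (N + 1) [SMOD Ideal.span {(X : ℤ⟦X⟧) ^ (N + 1)}] := by
    rw [← qPochhammer_two_mul]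
    refine (qPochhammer_smodEq X (by omega : N + 1 ≤ 2 * (N + 1))).symm.mono ?_
    exact Ideal.span_singleton_le_span_singleton.mpr (pow_dvd_pow X (N + 1).le_succ)
  have key : qPochhammer X (N + 1) ^ 2 ≡ thetaSeries * qPochhammer (X ^ 2) (N + 1)
      [SMOD Ideal.span {(X : ℤ⟦X⟧) ^ (N + 1)}] := by
    have hO := sq_prod_one_sub_X_pow_odd_mul_qPochhammer_smodEq (R := ℤ) (N + 1)
    have hθ := (thetaSeries_smodEq_partialTheta (N + 1)).symm
    refine (hP.pow 2).trans ?_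
    rw [mul_pow, sq (qPochhammer _ _), ← mul_assoc]
    exact (hO.trans hθ).mul SModEq.rfl
  rw [hD]
  exact coeff_eq_of_smodEq_X_pow key N.lt_succ_self
end
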